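/- arXiv:1208.3761 — 8 statements merged into one kernel-verified Lean document; each statement's English description precedes it below -/
import Mathlib

section
/- If f, g ∈ k[X_1, …, X_t] are L-homogeneous polynomials with f ∉ I and g ∉ I, then fg ∉ I. In other words, S(p,λ) = k[X_1, …, X_t]/I is an L-graded domain: any product of nonzero homogeneous elements of S(p,λ) is nonzero. -/
open scoped BigOperators

/-- The rank-one abelian group `L(p)`: the quotient of the free abelian group `ℤ^t`
on generators `e 0, …, e (t-1)` by the subgroup generated by the elements
`p i • e i - p 0 • e 0`. -/
abbrev LGrp (t : ℕ) (ht : 0 < t) (p : Fin t → ℕ) : Type :=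
  (Fin t → ℤ) ⧸ AddSubgroup.closure
    (Set.range fun i : Fin t =>
      (p i : ℤ) • Pi.single i (1 : ℤ) - (p ⟨0, ht⟩ : ℤ) • Pi.single ⟨0, ht⟩ (1 : ℤ))

/-- The image `x i` of the generator `e i` in `L(p)`. -/
def xgen (t : ℕ) (ht : 0 < t) (p : Fin t → ℕ) (i : Fin t) : LGrp t ht p :=
  QuotientAddGroup.mk (Pi.single i 1)

/-- The canonical element `c = p 0 • x 0` of `L(p)`. -/
def cElem (t : ℕ) (ht : 0 < t) (p : Fin t → ℕ) : LGrp t ht p :=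
  (p ⟨0, ht⟩ : ℤ) • xgen t ht p ⟨0, ht⟩

/-- The dualizing element `ω = (t - 2) • c - (x 0 + ⋯ + x (t-1))` of `L(p)`. -/
def omegaElem (t : ℕ) (ht : 0 < t) (p : Fin t → ℕ) : LGrp t ht p :=
  ((t : ℤ) - 2) • cElem t ht p - ∑ i, xgen t ht p i

/-- The positive cone `L₊ = {a 0 • x 0 + ⋯ + a (t-1) • x (t-1) : a i ∈ ℕ}`;
`x ≤ y` means `y - x ∈ L₊`. -/
def posCone (t : ℕ) (ht : 0 < t) (p : Fin t → ℕ) : Set (LGrp t ht p) :=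
  { y | ∃ a : Fin t → ℕ, y = ∑ i, (a i : ℤ) • xgen t ht p i }

open MvPolynomial in
/-- The ideal `I` of `k[X 0, …, X (t-1)]` generated by the canonical relations
`X i ^ p i - (X 1 ^ p 1 - λ i * X 0 ^ p 0)` for `2 ≤ i`. -/
noncomputable def canonIdeal (t : ℕ) (ht : 2 ≤ t) (p : Fin t → ℕ) (k : Type) [Field k]
    (lam : Fin t → k) : Ideal (MvPolynomial (Fin t) k) :=
  Ideal.span { f | ∃ i : Fin t, 2 ≤ (i : ℕ) ∧
    f = X i ^ p i -
      (X (⟨1, by omega⟩ : Fin t) ^ p (⟨1, by omega⟩ : Fin t) -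
        C (lam i) * X (⟨0, by omega⟩ : Fin t) ^ p (⟨0, by omega⟩ : Fin t)) }

/-- The weight function assigning to the variable `X i` the degree `x i ∈ L(p)`;
a polynomial is `L`-homogeneous of degree `d` iff it is weighted homogeneous of
degree `d` with respect to these weights. -/
def wtL (t : ℕ) (ht : 2 ≤ t) (p : Fin t → ℕ) : Fin t → LGrp t (by omega) p :=
  xgen t (by omega) p

/-!
Rewriting `X i ^ p i` as `h i = X 1 ^ p 1 - λ i * X 0 ^ p 0` for `i ≥ 2` gives a `k`-linear
normal form `N` with `N f ≡ f` modulo `I`. Since `N` is `k[X 0, X 1]`-linear and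
`N (g * X i ^ p i) = N g * h i`, it kills `I`, so `f ∈ I ↔ N f = 0`. For `i ≥ 2` the `i`-th
coordinate modulo `p i` is well defined on `L`, so the monomials of an `L`-homogeneous `f` all
have the same exponents modulo `p i`, and `N f = X ^ r * A` with `A ∈ k[X 0, X 1]`. Then
`N (f * g) = N (X ^ (r + r')) * A * B`, a product of nonzero elements of the domain `k[X]`.
-/

section

variable {σ M : Type*} [Fintype σ] [DecidableEq σ] [CommMonoid M]

theorem prod_apply_add_single (F : σ → ℕ → M) (e : σ →₀ ℕ)
    (j : σ) (n : ℕ) (c : M) (hc : F j (e j + n) = F j (e j) * c) :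
    ∏ i, F i ((e + Finsupp.single j n) i) = (∏ i, F i (e i)) * c := by
  calc ∏ i, F i ((e + Finsupp.single j n) i)
      = ∏ i, F i (e i) * if i = j then c else 1 := by
        refine Finset.prod_congr rfl fun i _ => ?_
        by_cases hij : i = j
        · subst hij; simp [hc]
        · simp [Finsupp.single_eq_of_ne' (Ne.symm hij), hij]
    _ = (∏ i, F i (e i)) * c := by rw [Finset.prod_mul_distrib, Finset.prod_ite_eq']; simp

end

namespace MvPolynomial

open Finset

section PowerReduction

variable {σ R : Type*} [CommRing R] (s : Finset σ) (p : σ → ℕ) (h : σ → MvPolynomial σ R)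

noncomputable def powerRelIdeal : Ideal (MvPolynomial σ R) :=
  Ideal.span ((fun i => X i ^ p i - h i) '' s)

variable {s p h} in
theorem X_pow_sub_mem_powerRelIdeal {i : σ} (hi : i ∈ s) :
    X i ^ p i - h i ∈ powerRelIdeal s p h :=
  Ideal.subset_span (Set.mem_image_of_mem _ hi)

variable [DecidableEq σ]

noncomputable def reduceFactor (i : σ) (n : ℕ) : MvPolynomial σ R :=
  if i ∈ s then X i ^ (n % p i) * h i ^ (n / p i) else X i ^ n

theorem mk_reduceFactor (i : σ) (n : ℕ) :
    Ideal.Quotient.mk (powerRelIdeal s p h) (reduceFactor s p h i n) =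
      Ideal.Quotient.mk (powerRelIdeal s p h) (X i ^ n) := by
  unfold reduceFactor
  split_ifs with hi
  · have hrel : Ideal.Quotient.mk (powerRelIdeal s p h) (h i) =
        Ideal.Quotient.mk (powerRelIdeal s p h) (X i ^ p i) :=
      (Ideal.Quotient.eq.mpr (X_pow_sub_mem_powerRelIdeal hi)).symm
    rw [map_mul, map_pow _ (h i), hrel, ← map_pow, ← map_mul, ← pow_mul, ← pow_add,
      Nat.mod_add_div]
  · rfl

variable [Fintype σ]

noncomputable def reduceMonomial (e : σ →₀ ℕ) : MvPolynomial σ R :=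
  ∏ i, reduceFactor s p h i (e i)

noncomputable def powerReduce : MvPolynomial σ R →ₗ[R] MvPolynomial σ R :=
  (basisMonomials σ R).constr R (reduceMonomial s p h)

variable {s p h}

theorem powerReduce_monomial (e : σ →₀ ℕ) (a : R) :
    powerReduce s p h (monomial e a) = a • reduceMonomial s p h e := by
  rw [← mul_one a, ← smul_eq_mul, ← smul_monomial, map_smul, smul_eq_mul, mul_one]
  exact congrArg (a • ·) ((basisMonomials σ R).constr_basis R _ e)

theorem reduceMonomial_add_single_self {j : σ} (hj : j ∈ s) (hpj : 0 < p j) (e : σ →₀ ℕ) :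
    reduceMonomial s p h (e + Finsupp.single j (p j)) = reduceMonomial s p h e * h j :=
  prod_apply_add_single _ _ _ _ _ <| by
    simp only [reduceFactor, if_pos hj, Nat.add_mod_right, Nat.add_div_right _ hpj, pow_succ,
      mul_assoc]

theorem reduceMonomial_add_single_one {i : σ} (hi : i ∉ s) (e : σ →₀ ℕ) :
    reduceMonomial s p h (e + Finsupp.single i 1) = reduceMonomial s p h e * X i :=
  prod_apply_add_single _ _ _ _ _ <| by simp only [reduceFactor, if_neg hi, pow_succ]

theorem reduceMonomial_eq_mul (e : σ →₀ ℕ) :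
    reduceMonomial s p h e = (∏ i ∈ s, X i ^ (e i % p i)) *
      ∏ i, if i ∈ s then h i ^ (e i / p i) else X i ^ e i := by
  have split (i : σ) : reduceFactor s p h i (e i) = (if i ∈ s then X i ^ (e i % p i) else 1) *
      if i ∈ s then h i ^ (e i / p i) else X i ^ e i := by
    unfold reduceFactor; split_ifs <;> simp
  rw [reduceMonomial, prod_congr rfl fun i _ => split i, prod_mul_distrib, prod_ite_mem,
    univ_inter]

theorem reduceMonomial_ne_zero [IsDomain R] (hh : ∀ i ∈ s, h i ≠ 0) (e : σ →₀ ℕ) :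
    reduceMonomial s p h e ≠ 0 := by
  refine prod_ne_zero_iff.mpr fun i _ => ?_
  unfold reduceFactor
  split_ifs with hi
  · exact mul_ne_zero (pow_ne_zero _ (X_ne_zero i)) (pow_ne_zero _ (hh i hi))
  · exact pow_ne_zero _ (X_ne_zero i)

theorem powerReduce_mul_X_pow_self {j : σ} (hj : j ∈ s) (hpj : 0 < p j)
    (g : MvPolynomial σ R) :
    powerReduce s p h (g * X j ^ p j) = powerReduce s p h g * h j := by
  induction g using induction_on' with
  | monomial e a =>
    rw [X_pow_eq_monomial, monomial_mul, mul_one, powerReduce_monomial, powerReduce_monomial,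
      reduceMonomial_add_single_self hj hpj, smul_mul_assoc]
  | add f g hf hg => rw [add_mul, map_add, map_add, hf, hg, add_mul]

theorem powerReduce_mul_X {i : σ} (hi : i ∉ s) (g : MvPolynomial σ R) :
    powerReduce s p h (g * X i) = powerReduce s p h g * X i := by
  induction g using induction_on' with
  | monomial e a =>
    rw [X, monomial_mul, mul_one, powerReduce_monomial, powerReduce_monomial,
      reduceMonomial_add_single_one hi, smul_mul_assoc, X]
  | add f g hf hg => rw [add_mul, map_add, map_add, hf, hg, add_mul]

theorem powerReduce_mul_of_mem_supported {q : MvPolynomial σ R} (hq : q ∈ supported R ↑sᶜ)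
    (g : MvPolynomial σ R) :
    powerReduce s p h (g * q) = powerReduce s p h g * q := by
  induction hq using Algebra.adjoin_induction generalizing g with
  | mem x hx =>
    obtain ⟨i, hi, rfl⟩ := hx
    exact powerReduce_mul_X (by simpa using hi) g
  | algebraMap r =>
    rw [algebraMap_eq, mul_comm, ← smul_eq_C_mul, map_smul, smul_eq_C_mul, mul_comm]
  | add x y _ _ hx hy => rw [mul_add, map_add, hx, hy, mul_add]
  | mul x y _ _ hx hy => rw [← mul_assoc, hy, hx, mul_assoc]

theorem mk_powerReduce (f : MvPolynomial σ R) :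
    Ideal.Quotient.mk (powerRelIdeal s p h) (powerReduce s p h f) =
      Ideal.Quotient.mk (powerRelIdeal s p h) f := by
  induction f using induction_on' with
  | monomial e a =>
    rw [powerReduce_monomial, smul_eq_C_mul, monomial_eq, Finsupp.prod_fintype _ _ (by simp),
      map_mul, map_mul, reduceMonomial, map_prod, map_prod]
    simp only [mk_reduceFactor]
  | add f g hf hg => rw [map_add, map_add, hf, hg, map_add]

theorem powerReduce_mul_eq_zero_of_mem (hp : ∀ i ∈ s, 0 < p i)
    (hh : ∀ i ∈ s, h i ∈ supported R ↑sᶜ) {f : MvPolynomial σ R}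
    (hf : f ∈ powerRelIdeal s p h) (g : MvPolynomial σ R) : powerReduce s p h (g * f) = 0 := by
  induction hf using Submodule.span_induction generalizing g with
  | mem x hx =>
    obtain ⟨i, hi, rfl⟩ := hx
    rw [mul_sub, map_sub, powerReduce_mul_X_pow_self hi (hp i hi),
      powerReduce_mul_of_mem_supported (hh i hi), sub_self]
  | zero => rw [mul_zero, map_zero]
  | add x y _ _ hx hy => rw [mul_add, map_add, hx, hy, add_zero]
  | smul a x _ hx => rw [smul_eq_mul, ← mul_assoc, hx]

theorem mem_powerRelIdeal_iff (hp : ∀ i ∈ s, 0 < p i) (hh : ∀ i ∈ s, h i ∈ supported R ↑sᶜ)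
    (f : MvPolynomial σ R) : f ∈ powerRelIdeal s p h ↔ powerReduce s p h f = 0 := by
  refine ⟨fun hf => by simpa using powerReduce_mul_eq_zero_of_mem hp hh hf 1, fun hf => ?_⟩
  rw [← Ideal.Quotient.eq_zero_iff_mem, ← mk_powerReduce, hf, map_zero]

theorem powerReduce_eq_of_sub_mem (hp : ∀ i ∈ s, 0 < p i) (hh : ∀ i ∈ s, h i ∈ supported R ↑sᶜ)
    {f g : MvPolynomial σ R} (hfg : f - g ∈ powerRelIdeal s p h) :
    powerReduce s p h f = powerReduce s p h g := by
  rw [← sub_eq_zero, ← map_sub, ← one_mul (f - g)]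
  exact powerReduce_mul_eq_zero_of_mem hp hh hfg 1

theorem powerReduce_eq_mul_of_mod_eq (hh : ∀ i ∈ s, h i ∈ supported R ↑sᶜ)
    {f : MvPolynomial σ R} {r : σ → ℕ} (hf : ∀ e ∈ f.support, ∀ i ∈ s, e i % p i = r i) :
    ∃ A ∈ supported R ↑sᶜ, powerReduce s p h f = (∏ i ∈ s, X i ^ r i) * A := by
  refine ⟨∑ e ∈ f.support, coeff e f •
    ∏ i, if i ∈ s then h i ^ (e i / p i) else X i ^ e i, ?_, ?_⟩
  · refine Subalgebra.sum_mem _ fun e _ => Subalgebra.smul_mem _ (Subalgebra.prod_mem _ ?_) _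
    intro i _
    split_ifs with hi
    · exact Subalgebra.pow_mem _ (hh i hi) _
    · exact Subalgebra.pow_mem _
        (Algebra.subset_adjoin (Set.mem_image_of_mem X (by simpa using hi))) _
  · conv_lhs => rw [f.as_sum]
    rw [map_sum, mul_sum]
    refine sum_congr rfl fun e he => ?_
    rw [powerReduce_monomial, reduceMonomial_eq_mul, mul_smul_comm,
      prod_congr rfl fun i hi => by rw [hf e he i hi]]

theorem mul_notMem_powerRelIdeal [IsDomain R] (hp : ∀ i ∈ s, 0 < p i)
    (hh : ∀ i ∈ s, h i ∈ supported R ↑sᶜ) (hh0 : ∀ i ∈ s, h i ≠ 0) {f g : MvPolynomial σ R}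
    (hf : ∀ e ∈ f.support, ∀ e' ∈ f.support, ∀ i ∈ s, e i % p i = e' i % p i)
    (hg : ∀ e ∈ g.support, ∀ e' ∈ g.support, ∀ i ∈ s, e i % p i = e' i % p i)
    (hfI : f ∉ powerRelIdeal s p h) (hgI : g ∉ powerRelIdeal s p h) :
    f * g ∉ powerRelIdeal s p h := by
  obtain ⟨e₀, he₀⟩ := (support_nonempty (p := f)).mpr <| by rintro rfl; exact hfI (zero_mem _)
  obtain ⟨e₁, he₁⟩ := (support_nonempty (p := g)).mpr <| by rintro rfl; exact hgI (zero_mem _)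
  set r := fun i => e₀ i % p i
  set r' := fun i => e₁ i % p i
  rw [mem_powerRelIdeal_iff hp hh] at hfI hgI ⊢
  obtain ⟨A, hA, hfA⟩ := powerReduce_eq_mul_of_mod_eq hh fun e he => hf e he e₀ he₀
  obtain ⟨B, hB, hgB⟩ := powerReduce_eq_mul_of_mod_eq hh fun e he => hg e he e₁ he₁
  have hmono : (∏ i ∈ s, X i ^ r i) * (∏ i ∈ s, X i ^ r' i) =
      (monomial (∑ i ∈ s, Finsupp.single i (r i + r' i)) 1 : MvPolynomial σ R) := by
    simp only [← prod_mul_distrib, monomial_sum_one, X_pow_eq_monomial, monomial_mul, one_mul,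
      Finsupp.single_add]
  have hfg : powerReduce s p h (f * g) =
      reduceMonomial s p h (∑ i ∈ s, Finsupp.single i (r i + r' i)) * (A * B) := by
    have hcong : f * g - powerReduce s p h f * powerReduce s p h g ∈ powerRelIdeal s p h :=
      Ideal.Quotient.eq.mp (by simp only [map_mul, mk_powerReduce])
    rw [powerReduce_eq_of_sub_mem hp hh hcong, hfA, hgB, mul_mul_mul_comm, hmono,
      powerReduce_mul_of_mem_supported (mul_mem hA hB), powerReduce_monomial, one_smul]
  rw [hfg]
  refine mul_ne_zero (reduceMonomial_ne_zero hh0 _) (mul_ne_zero ?_ ?_) <;> rintro rfl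
  · exact hfI (by rw [hfA, mul_zero])
  · exact hgI (by rw [hgB, mul_zero])

end PowerReduction

end MvPolynomial

open MvPolynomial

def highIndices (t : ℕ) : Finset (Fin t) := {i | 2 ≤ (i : ℕ)}

noncomputable def canonRhs (t : ℕ) (ht : 2 ≤ t) (p : Fin t → ℕ) {R : Type*} [CommRing R]
    (lam : Fin t → R) (i : Fin t) : MvPolynomial (Fin t) R :=
  X (⟨1, by omega⟩ : Fin t) ^ p (⟨1, by omega⟩ : Fin t) -
    C (lam i) * X (⟨0, by omega⟩ : Fin t) ^ p (⟨0, by omega⟩ : Fin t)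

theorem canonIdeal_eq_powerRelIdeal (t : ℕ) (ht : 2 ≤ t) (p : Fin t → ℕ) (k : Type) [Field k]
    (lam : Fin t → k) :
    canonIdeal t ht p k lam = powerRelIdeal (highIndices t) p (canonRhs t ht p lam) := by
  unfold canonIdeal powerRelIdeal
  congr 1
  ext f
  simp [highIndices, canonRhs, eq_comm]

theorem canonRhs_mem_supported (t : ℕ) (ht : 2 ≤ t) (p : Fin t → ℕ) {R : Type*} [CommRing R]
    (lam : Fin t → R) (i : Fin t) :
    canonRhs t ht p lam i ∈ supported R ↑(highIndices t)ᶜ := by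
  have hX (j : Fin t) (hj : (j : ℕ) < 2) : X j ∈ supported R ↑(highIndices t)ᶜ :=
    Algebra.subset_adjoin (Set.mem_image_of_mem X (by simp [highIndices]; omega))
  exact sub_mem (pow_mem (hX _ (by simp)) _)
    (mul_mem (Subalgebra.algebraMap_mem _ (lam i)) (pow_mem (hX _ (by simp)) _))

theorem canonRhs_ne_zero (t : ℕ) (ht : 2 ≤ t) (p : Fin t → ℕ) (hp0 : p ⟨0, by omega⟩ ≠ 0)
    {R : Type*} [CommRing R] [Nontrivial R] (lam : Fin t → R) (i : Fin t) :
    canonRhs t ht p lam i ≠ 0 := by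
  intro h0
  have := congrArg (eval fun j : Fin t => if (j : ℕ) = 1 then 1 else 0) h0
  simp [canonRhs, hp0] at this

/-- For `j ≠ 0` the relation `p j • e j - p 0 • e 0` has `j`-th coordinate `p j ≡ 0`, so the
`j`-th coordinate modulo `p j` descends to `L(p)`. -/
noncomputable def coordMod (t : ℕ) (ht : 0 < t) (p : Fin t → ℕ) (j : Fin t)
    (hj : j ≠ ⟨0, ht⟩) : LGrp t ht p →+ ZMod (p j) :=
  QuotientAddGroup.lift _
    ((Int.castAddHom (ZMod (p j))).comp (Pi.evalAddMonoidHom (fun _ : Fin t => ℤ) j)) <| by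
    refine (AddSubgroup.closure_le _).mpr ?_
    rintro v ⟨i, rfl⟩
    by_cases hij : i = j
    · subst hij; simp [hj]
    · simp [hij, hj.symm]

theorem coordMod_weight (t : ℕ) (ht : 0 < t) (p : Fin t → ℕ) (j : Fin t)
    (hj : j ≠ ⟨0, ht⟩) (e : Fin t →₀ ℕ) :
    coordMod t ht p j hj (Finsupp.weight (xgen t ht p) e) = e j := by
  show ((coordMod t ht p j hj).comp (Finsupp.weight (xgen t ht p))) e =
    ((Nat.castAddMonoidHom (ZMod (p j))).comp (Finsupp.applyAddHom j)) e
  congr 1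
  refine Finsupp.addHom_ext fun i n => ?_
  rw [AddMonoidHom.comp_apply, Finsupp.weight_single, map_nsmul, xgen, coordMod,
    QuotientAddGroup.lift_mk]
  by_cases hij : i = j
  · subst hij; simp
  · simp [hij, Finsupp.single_eq_of_ne' hij]

theorem mod_eq_mod_of_isWeightedHomogeneous (t : ℕ) (ht : 2 ≤ t) (p : Fin t → ℕ) {R : Type*}
    [CommSemiring R] {f : MvPolynomial (Fin t) R} {d : LGrp t (by omega) p}
    (hf : f.IsWeightedHomogeneous (wtL t ht p) d) :
    ∀ e ∈ f.support, ∀ e' ∈ f.support, ∀ i ∈ highIndices t, e i % p i = e' i % p i := by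
  intro e he e' he' i hi
  have hi0 : i ≠ ⟨0, by omega⟩ := by
    rintro rfl
    simp [highIndices] at hi
  have hd := congrArg (coordMod t _ p i hi0)
    ((hf (mem_support_iff.mp he)).trans (hf (mem_support_iff.mp he')).symm)
  rw [wtL, coordMod_weight, coordMod_weight] at hd
  exact (ZMod.natCast_eq_natCast_iff' _ _ _).mp hd

/-- `S(p,λ)` is an `L`-graded domain: if `f, g` are `L`-homogeneous
polynomials not in `I`, then `f * g ∉ I`. -/
theorem graded_domain (t : ℕ) (ht : 2 ≤ t) (p : Fin t → ℕ) (hp : ∀ i, 2 ≤ p i)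
    (k : Type) [Field k] (lam : Fin t → k)
    (f g : MvPolynomial (Fin t) k) (df dg : LGrp t (by omega) p)
    (hf : f.IsWeightedHomogeneous (wtL t ht p) df)
    (hg : g.IsWeightedHomogeneous (wtL t ht p) dg)
    (hfI : f ∉ canonIdeal t ht p k lam)
    (hgI : g ∉ canonIdeal t ht p k lam) :
    f * g ∉ canonIdeal t ht p k lam := by
  rw [canonIdeal_eq_powerRelIdeal] at hfI hgI ⊢
  exact mul_notMem_powerRelIdeal (fun i _ => by have := hp i; omega)
    (fun i _ => canonRhs_mem_supported t ht p lam i)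
    (fun i _ => canonRhs_ne_zero t ht p (by have := hp ⟨0, by omega⟩; omega) lam i)
    (mod_eq_mod_of_isWeightedHomogeneous t ht p hf)
    (mod_eq_mod_of_isWeightedHomogeneous t ht p hg) hfI hgI
end

section
/- For every d ∈ L, there exists an L-homogeneous polynomial f ∈ k[X_1, …, X_t] of degree d with f ∉ I if and only if d ∈ L_+. Equivalently, the homogeneous component S_d of the L-graded algebra S(p,λ) = k[X_1, …, X_t]/I is nonzero if and only if d ≥ 0. -/
open scoped BigOperators

/-!
A monomial `X^m` is `L`-homogeneous of degree `∑ mᵢ xᵢ`, which gives one direction at once: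
a nonzero homogeneous polynomial of degree `d` has a monomial of weight `d`, so `d ∈ L₊`.
Conversely every monomial `X^m` lies outside `I`, because `I` vanishes at a point `z` of the
torus `(k^×)^t`: take `z₀ = 1`, pick `s ∉ {0} ∪ {λᵢ}` (possible since `k` is infinite) and let
`z₁`, `zᵢ` be a `p₁`-th root of `s` and a `pᵢ`-th root of `s - λᵢ`.
-/

open MvPolynomial

theorem MvPolynomial.IsWeightedHomogeneous.exists_weight_eq {R M σ : Type*} [CommSemiring R]
    [AddCommMonoid M] {w : σ → M} {f : MvPolynomial σ R} {d : M}
    (hf : f.IsWeightedHomogeneous w d) (hf0 : f ≠ 0) : ∃ m : σ →₀ ℕ, Finsupp.weight w m = d := by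
  obtain ⟨m, hm⟩ := ne_zero_iff.mp hf0
  exact ⟨m, hf hm⟩

theorem monomial_notMem_of_le_ker_eval {R σ : Type*} [CommRing R] [IsDomain R]
    {I : Ideal (MvPolynomial σ R)} {z : σ → R} (hI : I ≤ RingHom.ker (eval z))
    (hz : ∀ i, z i ≠ 0) (m : σ →₀ ℕ) : monomial m 1 ∉ I := by
  intro hm
  have h0 : (m.prod fun i e => z i ^ e) = 0 := by
    simpa only [RingHom.mem_ker, eval_monomial, one_mul] using hI hm
  exact Finset.prod_ne_zero_iff.mpr (fun i _ => pow_ne_zero _ (hz i)) h0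

theorem exists_pow_eq_ne_zero {k ι : Type*} [Field k] [IsAlgClosed k] {n : ι → ℕ}
    (hn : ∀ i, n i ≠ 0) {w : ι → k} (hw : ∀ i, w i ≠ 0) :
    ∃ z : ι → k, (∀ i, z i ^ n i = w i) ∧ ∀ i, z i ≠ 0 := by
  choose z hz using fun i => IsAlgClosed.exists_pow_nat_eq (w i) (Nat.pos_of_ne_zero (hn i))
  exact ⟨z, hz, fun i hzi => hw i (by rw [← hz i, hzi, zero_pow (hn i)])⟩

theorem mem_posCone_iff_exists_weight_eq (t : ℕ) (ht : 0 < t) (p : Fin t → ℕ)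
    (d : LGrp t ht p) :
    d ∈ posCone t ht p ↔ ∃ m : Fin t →₀ ℕ, Finsupp.weight (xgen t ht p) m = d := by
  constructor
  · rintro ⟨a, rfl⟩
    exact ⟨Finsupp.equivFunOnFinite.symm a, by simp [Finsupp.weight_eq_sum]⟩
  · rintro ⟨m, rfl⟩
    exact ⟨m, by simp [Finsupp.weight_eq_sum]⟩

theorem canonIdeal_le_ker_eval (t : ℕ) (ht : 2 ≤ t) (p : Fin t → ℕ) (k : Type) [Field k]
    (lam : Fin t → k) (z : Fin t → k)
    (hz : ∀ i : Fin t, 2 ≤ (i : ℕ) →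
      z i ^ p i = z ⟨1, by omega⟩ ^ p ⟨1, by omega⟩ - lam i * z ⟨0, by omega⟩ ^ p ⟨0, by omega⟩) :
    canonIdeal t ht p k lam ≤ RingHom.ker (eval z) := by
  rw [canonIdeal, Ideal.span_le]
  rintro g ⟨i, hi, rfl⟩
  simp only [SetLike.mem_coe, RingHom.mem_ker, map_sub, map_pow, map_mul, eval_X, eval_C,
    hz i hi, sub_self]

theorem exists_canonIdeal_le_ker_eval (t : ℕ) (ht : 2 ≤ t) (p : Fin t → ℕ) (hp : ∀ i, p i ≠ 0)
    (k : Type) [Field k] [IsAlgClosed k] (lam : Fin t → k) :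
    ∃ z : Fin t → k, canonIdeal t ht p k lam ≤ RingHom.ker (eval z) ∧ ∀ i, z i ≠ 0 := by
  classical
  obtain ⟨s, hs⟩ := Infinite.exists_notMem_finset (insert 0 (Finset.univ.image lam))
  simp only [Finset.mem_insert, Finset.mem_image, Finset.mem_univ, true_and, not_or,
    not_exists] at hs
  let w : Fin t → k := fun i => if (i : ℕ) = 0 then 1 else if (i : ℕ) = 1 then s else s - lam i
  have hw : ∀ i, w i ≠ 0 := fun i => by
    dsimp only [w]
    split_ifs
    exacts [one_ne_zero, hs.1, sub_ne_zero.mpr fun h => hs.2 i h.symm]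
  obtain ⟨z, hzw, hz⟩ := exists_pow_eq_ne_zero hp hw
  refine ⟨z, canonIdeal_le_ker_eval t ht p k lam z fun i hi => ?_, hz⟩
  simp [hzw, w, show (i : ℕ) ≠ 0 by omega, show (i : ℕ) ≠ 1 by omega]

theorem homogeneous_component_nonzero_iff_general (t : ℕ) (ht : 2 ≤ t) (p : Fin t → ℕ) (hp : ∀ i, 2 ≤ p i)
    (k : Type) [Field k] [IsAlgClosed k] (lam : Fin t → k)
    (d : LGrp t (Nat.lt_of_lt_of_le Nat.zero_lt_two ht) p) :
    (∃ f : MvPolynomial (Fin t) k,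
        f.IsWeightedHomogeneous (wtL t ht p) d ∧ f ∉ canonIdeal t ht p k lam)
      ↔ d ∈ posCone t (Nat.lt_of_lt_of_le Nat.zero_lt_two ht) p := by
  obtain ⟨z, hzI, hz⟩ :=
    exists_canonIdeal_le_ker_eval t ht p (fun i => by have := hp i; omega) k lam
  rw [mem_posCone_iff_exists_weight_eq]
  constructor
  · rintro ⟨f, hf, hfI⟩
    exact hf.exists_weight_eq fun h => hfI (h ▸ Ideal.zero_mem _)
  · rintro ⟨m, rfl⟩
    exact ⟨monomial m 1, isWeightedHomogeneous_monomial _ _ _ rfl,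
      monomial_notMem_of_le_ker_eval hzI hz m⟩

/-- the homogeneous component `S_d` of `S(p,λ)` is nonzero iff `d ≥ 0`,
i.e. there is an `L`-homogeneous polynomial of degree `d` not in `I` iff `d ∈ L₊`. -/
theorem homogeneous_component_nonzero_iff (t : ℕ) (ht : 2 ≤ t) (p : Fin t → ℕ) (hp : ∀ i, 2 ≤ p i)
    (k : Type) [Field k] [IsAlgClosed k] (lam : Fin t → k)
    (hlam0 : ∀ i : Fin t, 2 ≤ (i : ℕ) → lam i ≠ 0)
    (hlam1 : ∀ i j : Fin t, 2 ≤ (i : ℕ) → 2 ≤ (j : ℕ) → i ≠ j → lam i ≠ lam j)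
    (d : LGrp t (Nat.lt_of_lt_of_le Nat.zero_lt_two ht) p) :
    (∃ f : MvPolynomial (Fin t) k,
        f.IsWeightedHomogeneous (wtL t ht p) d ∧ f ∉ canonIdeal t ht p k lam)
      ↔ d ∈ posCone t (Nat.lt_of_lt_of_le Nat.zero_lt_two ht) p :=
  homogeneous_component_nonzero_iff_general t ht p hp k lam d
end

section
/- For every x ∈ L, exactly one of the following two alternatives holds: x ≥ 0, or x ≤ c + ω. (Almost linearity of the order on L(p).) -/
open scoped BigOperators

/-!
Every `x = ∑ aᵢ xᵢ ∈ L(p)` has a well-defined degree `δ x = ∑ ⌊aᵢ / pᵢ⌋`: the relations change the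
`aᵢ` by `pᵢ mᵢ` with `∑ mᵢ = 0`, hence the floors by `mᵢ` with total change zero. Reducing every
`aᵢ` modulo `pᵢ` and moving the quotients into a multiple of `c = p₀ x₀` shows that `x ≥ 0` iff
`δ x ≥ 0`. Finally `c + ω - x` is represented by `(-1 - aᵢ)ᵢ + (t - 1) p₀ e₀`, and
`⌊(-1 - a) / q⌋ = -1 - ⌊a / q⌋` gives `δ (c + ω - x) = -1 - δ x`. So exactly one of `δ x` and
`δ (c + ω - x)` is nonnegative.
-/

lemma Int.neg_one_sub_ediv (a : ℤ) {q : ℤ} (hq : 0 < q) : (-1 - a) / q = -1 - a / q := by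
  refine ((Int.ediv_emod_unique (r := q - 1 - a % q) hq).2 ⟨?_, ?_, ?_⟩).1
  · linear_combination -(Int.mul_ediv_add_emod a q)
  · linarith [Int.emod_lt_of_pos a hq]
  · linarith [Int.emod_nonneg a hq.ne']

namespace LGrp

open QuotientAddGroup

variable {t : ℕ} (ht : 0 < t) (p : Fin t → ℕ)

def degree (a : Fin t → ℤ) : ℤ := ∑ i, a i / (p i : ℤ)

variable {p}

lemma degree_add_mul (hp : ∀ i, 0 < p i) (a m : Fin t → ℤ) :
    degree p (a + fun j => (p j : ℤ) * m j) = degree p a + ∑ j, m j := by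
  simp only [degree, Pi.add_apply, ← Finset.sum_add_distrib]
  exact Finset.sum_congr rfl fun j _ => Int.add_mul_ediv_left _ _ (Int.natCast_pos.2 (hp j)).ne'

lemma degree_neg_one_sub (hp : ∀ i, 0 < p i) (a : Fin t → ℤ) :
    degree p (fun j => -1 - a j) = -t - degree p a := by
  simp only [degree, fun j => Int.neg_one_sub_ediv (a j) (Int.natCast_pos.2 (hp j)),
    Finset.sum_sub_distrib, Finset.sum_const, Finset.card_univ, Fintype.card_fin, smul_neg,
    nsmul_eq_mul, mul_one]

lemma degree_nonneg {a : Fin t → ℤ} (ha : 0 ≤ a) : 0 ≤ degree p a :=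
  Finset.sum_nonneg fun i _ => Int.ediv_nonneg (ha i) (Int.natCast_nonneg _)

lemma mk_eq_mk_iff {a b : Fin t → ℤ} :
    (mk a : LGrp t ht p) = mk b ↔
      ∃ m : Fin t → ℤ, ∑ j, m j = 0 ∧ b = a + fun j => (p j : ℤ) * m j := by
  rw [QuotientAddGroup.eq]
  constructor
  · intro h
    obtain ⟨m, hm, hg⟩ : ∃ m : Fin t → ℤ, ∑ j, m j = 0 ∧ -a + b = fun j => (p j : ℤ) * m j := by
      refine AddSubgroup.closure_induction (p := fun g _ =>
        ∃ m : Fin t → ℤ, ∑ j, m j = 0 ∧ g = fun j => (p j : ℤ) * m j) ?_ ?_ ?_ ?_ h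
      · rintro _ ⟨i, rfl⟩
        refine ⟨Pi.single i 1 - Pi.single ⟨0, ht⟩ 1, by simp [Finset.sum_sub_distrib], ?_⟩
        funext j
        simp only [Pi.sub_apply, Pi.smul_apply, Pi.single_apply, smul_eq_mul]
        split_ifs <;> subst_vars <;> ring
      · exact ⟨0, by simp, by funext; simp⟩
      · rintro g g' _ _ ⟨m, hm, rfl⟩ ⟨m', hm', rfl⟩
        refine ⟨m + m', by simp [Finset.sum_add_distrib, hm, hm'], ?_⟩
        funext j
        simp only [Pi.add_apply]
        ring
      · rintro g _ ⟨m, hm, rfl⟩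
        exact ⟨-m, by simp [hm], by funext j; simp⟩
    exact ⟨m, hm, by rw [← hg]; abel⟩
  · rintro ⟨m, hm, rfl⟩
    have hcomb : (fun j => (p j : ℤ) * m j) = ∑ i, m i •
        ((p i : ℤ) • Pi.single i 1 - (p ⟨0, ht⟩ : ℤ) • Pi.single ⟨0, ht⟩ 1) := by
      funext j
      simp [Finset.sum_apply, Pi.single_apply, mul_sub, Finset.sum_sub_distrib, ← Finset.sum_mul,
        hm, mul_comm]
    rw [neg_add_cancel_left, hcomb]
    exact sum_mem fun i _ =>
      AddSubgroup.zsmul_mem _ (AddSubgroup.subset_closure (Set.mem_range_self i)) _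

lemma degree_eq_of_mk_eq (hp : ∀ i, 0 < p i) {a b : Fin t → ℤ}
    (h : (mk a : LGrp t ht p) = mk b) : degree p a = degree p b := by
  obtain ⟨m, hm, rfl⟩ := (mk_eq_mk_iff ht).1 h
  rw [degree_add_mul hp, hm, add_zero]

lemma sum_zsmul_xgen (a : Fin t → ℤ) : ∑ i, a i • xgen t ht p i = (mk a : LGrp t ht p) := by
  simp only [xgen, ← QuotientAddGroup.mk_zsmul, ← QuotientAddGroup.mk_sum, ← Pi.single_smul',
    smul_eq_mul, mul_one, Finset.univ_sum_single]

lemma mk_mem_posCone_of_nonneg {b : Fin t → ℤ} (hb : 0 ≤ b) :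
    (mk b : LGrp t ht p) ∈ posCone t ht p :=
  ⟨fun i => (b i).toNat, by simp only [Int.toNat_of_nonneg (hb _), sum_zsmul_xgen]⟩

lemma mk_mem_posCone_iff (hp : ∀ i, 0 < p i) (a : Fin t → ℤ) :
    (mk a : LGrp t ht p) ∈ posCone t ht p ↔ 0 ≤ degree p a := by
  constructor
  · rintro ⟨n, hn⟩
    rw [sum_zsmul_xgen] at hn
    rw [degree_eq_of_mk_eq ht hp hn]
    exact degree_nonneg fun i => Int.natCast_nonneg (n i)
  · intro ha
    set c : Fin t → ℤ := Pi.single ⟨0, ht⟩ (degree p a)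
    set m : Fin t → ℤ := fun j => -(a j / p j) + c j
    have hm : ∑ j, m j = 0 := by simp [m, c, Finset.sum_add_distrib, degree]
    have hc : 0 ≤ c := Pi.single_nonneg.2 ha
    have hb : 0 ≤ a + fun j => (p j : ℤ) * m j := fun j => by
      have hb_eq : a j + p j * m j = a j % p j + p j * c j := by
        rw [Int.emod_def]; ring
      simp only [Pi.add_apply, Pi.zero_apply, hb_eq]
      exact add_nonneg (Int.emod_nonneg _ (Int.natCast_pos.2 (hp j)).ne')
        (mul_nonneg (Int.natCast_nonneg _) (hc j))
    rw [(mk_eq_mk_iff ht).2 ⟨m, hm, rfl⟩]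
    exact mk_mem_posCone_of_nonneg ht hb

lemma cElem_add_omegaElem_sub_mk (a : Fin t → ℤ) :
    cElem t ht p + omegaElem t ht p - mk a =
      (mk ((fun j => -1 - a j) +
        fun j => (p j : ℤ) * (Pi.single ⟨0, ht⟩ ((t : ℤ) - 1) : Fin t → ℤ) j) : LGrp t ht p) := by
  have hsum : ∑ i, xgen t ht p i = mk 1 := by simpa using sum_zsmul_xgen ht (p := p) 1
  rw [omegaElem, hsum, cElem, xgen, ← QuotientAddGroup.mk_zsmul, ← QuotientAddGroup.mk_zsmul,
    ← QuotientAddGroup.mk_sub, ← QuotientAddGroup.mk_add, ← QuotientAddGroup.mk_sub]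
  congr 1
  funext j
  by_cases hj : j = ⟨0, ht⟩
  · subst hj
    simp only [Pi.add_apply, Pi.sub_apply, Pi.smul_apply, Pi.single_eq_same, Pi.one_apply,
      smul_eq_mul]
    ring
  · simp [hj]

end LGrp

/-- almost linearity of the order on `L(p)`: for every `x ∈ L`,
exactly one of `x ≥ 0` and `x ≤ c + ω` holds. -/
theorem almost_linear_order
    (t : ℕ) (ht : 0 < t) (p : Fin t → ℕ) (hp : ∀ i, 2 ≤ p i)
    (x : LGrp t ht p) :
    Xor' (x ∈ posCone t ht p)
      (cElem t ht p + omegaElem t ht p - x ∈ posCone t ht p) := by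
  have hp' : ∀ i, 0 < p i := fun i => Nat.zero_lt_of_lt (hp i)
  obtain ⟨a, rfl⟩ := QuotientAddGroup.mk_surjective x
  rw [LGrp.cElem_add_omegaElem_sub_mk, LGrp.mk_mem_posCone_iff ht hp',
    LGrp.mk_mem_posCone_iff ht hp', LGrp.degree_add_mul hp', LGrp.degree_neg_one_sub hp',
    Fintype.sum_pi_single']
  exact xor_iff_iff_not.2 (by omega)
end

section
/- For every z ∈ L, one has −c ≤ z ≤ c if and only if neither z + ω ≥ 0 nor −z + ω ≥ 0. (This is the group-theoretic content of the Ext-vanishing criterion for pairs of line bundles: Ext¹(L(x),L(y)) = 0 = Ext¹(L(y),L(x)) iff −c ≤ y − x ≤ c.) -/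
open scoped BigOperators

section Aux
variable (t : ℕ) (ht : 0 < t) (p : Fin t → ℕ)

/-- The quotient map as an additive homomorphism. -/
noncomputable def mkL : (Fin t → ℤ) →+ LGrp t ht p :=
  QuotientAddGroup.mk' _

lemma mkL_single (i : Fin t) : mkL t ht p (Pi.single i 1) = xgen t ht p i := rfl

lemma mk_eq_sum (f : Fin t → ℤ) :
    mkL t ht p f = ∑ i, f i • xgen t ht p i := by
  have hf : f = ∑ i, f i • Pi.single i (1:ℤ) := by
    ext j; simp [Finset.sum_apply, Pi.single_apply]
  conv_lhs => rw [hf]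
  rw [map_sum]; simp only [map_zsmul, mkL_single]

/-- The fundamental relation `p i • x i = c`. -/
lemma rel (i : Fin t) : (p i : ℤ) • xgen t ht p i = cElem t ht p := by
  have : (QuotientAddGroup.mk' _ : (Fin t → ℤ) →+ LGrp t ht p)
        ((p i : ℤ) • Pi.single i 1)
      = (QuotientAddGroup.mk' _) ((p ⟨0,ht⟩ : ℤ) • Pi.single ⟨0,ht⟩ 1) := by
    rw [QuotientAddGroup.mk'_eq_mk']
    exact ⟨-((p i : ℤ) • Pi.single i (1:ℤ) - (p ⟨0,ht⟩ : ℤ) • Pi.single ⟨0,ht⟩ (1:ℤ)),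
      neg_mem (AddSubgroup.subset_closure ⟨i, rfl⟩), by abel⟩
  simpa [xgen, cElem] using this

lemma posCone_add {y z : LGrp t ht p} (hy : y ∈ posCone t ht p)
    (hz : z ∈ posCone t ht p) : y + z ∈ posCone t ht p := by
  obtain ⟨a, rfl⟩ := hy
  obtain ⟨b, rfl⟩ := hz
  refine ⟨a + b, ?_⟩
  rw [← Finset.sum_add_distrib]
  refine Finset.sum_congr rfl fun i _ => ?_
  rw [Pi.add_apply, Nat.cast_add, add_zsmul]

/-- Normal form: every element is `m • c + ∑ aᵢ • xᵢ` with `0 ≤ aᵢ < pᵢ`. -/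
lemma normal_form (hp : ∀ i, 2 ≤ p i) (z : LGrp t ht p) :
    ∃ (m : ℤ) (a : Fin t → ℕ), (∀ i, a i < p i) ∧
      z = m • cElem t ht p + ∑ i, (a i : ℤ) • xgen t ht p i := by
  obtain ⟨f, rfl⟩ := QuotientAddGroup.mk'_surjective _ z
  have hz : QuotientAddGroup.mk' _ f = mkL t ht p f := rfl
  rw [hz, mk_eq_sum]
  refine ⟨∑ i, f i / (p i : ℤ), fun i => (f i % (p i : ℤ)).toNat, ?_, ?_⟩
  · intro i
    have hpos : (0:ℤ) < (p i : ℤ) := by exact_mod_cast lt_of_lt_of_le (by norm_num) (hp i)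
    have h1 : f i % (p i : ℤ) < (p i : ℤ) := Int.emod_lt_of_pos _ hpos
    have h2 : 0 ≤ f i % (p i : ℤ) := Int.emod_nonneg _ hpos.ne'
    show (f i % (p i : ℤ)).toNat < p i
    omega
  · rw [show (∑ i, f i / (p i:ℤ)) • cElem t ht p = ∑ i, (f i / (p i:ℤ)) • cElem t ht p from
      map_sum (zmultiplesHom _ (cElem t ht p)) _ _]
    rw [← Finset.sum_add_distrib]
    refine Finset.sum_congr rfl fun i _ => ?_
    have hpos : (0:ℤ) < (p i : ℤ) := by exact_mod_cast lt_of_lt_of_le (by norm_num) (hp i)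
    have hm : ((f i % (p i : ℤ)).toNat : ℤ) = f i % (p i : ℤ) :=
      Int.toNat_of_nonneg (Int.emod_nonneg _ hpos.ne')
    rw [hm, ← rel t ht p i, smul_smul, ← add_zsmul]
    congr 1
    rw [mul_comm]
    exact (Int.mul_ediv_add_emod (f i) (p i)).symm

/-- `d i = ∏_{j ≠ i} p j`. -/
def dcoef (i : Fin t) : ℤ := ∏ j ∈ Finset.univ.erase i, (p j : ℤ)

lemma dcoef_pos (hp : ∀ i, 2 ≤ p i) (i : Fin t) : 0 < dcoef t p i :=
  Finset.prod_pos fun j _ => by exact_mod_cast lt_of_lt_of_le (by norm_num) (hp j)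

lemma p_mul_dcoef (i : Fin t) : (p i : ℤ) * dcoef t p i = ∏ j, (p j : ℤ) := by
  unfold dcoef
  exact Finset.mul_prod_erase Finset.univ (fun j => (p j : ℤ)) (Finset.mem_univ i)

/-- Auxiliary degree homomorphism on `ℤ^t`. -/
def degAux : (Fin t → ℤ) →+ ℤ where
  toFun f := ∑ i, f i * dcoef t p i
  map_zero' := by simp
  map_add' f g := by
    simp [add_mul, Finset.sum_add_distrib]

lemma degAux_single (i : Fin t) (m : ℤ) :
    degAux t p (m • Pi.single i 1) = m * dcoef t p i := by
  simp [degAux, Pi.single_apply, Finset.sum_ite_eq', mul_assoc]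

lemma degAux_ker : AddSubgroup.closure
    (Set.range fun i : Fin t =>
      (p i : ℤ) • Pi.single i (1 : ℤ) - (p ⟨0, ht⟩ : ℤ) • Pi.single ⟨0, ht⟩ (1 : ℤ))
    ≤ (degAux t p).ker := by
  rw [AddSubgroup.closure_le]
  rintro g ⟨i, rfl⟩
  simp only [SetLike.mem_coe, AddMonoidHom.mem_ker, map_sub, degAux_single]
  rw [p_mul_dcoef, p_mul_dcoef, sub_self]

/-- The degree homomorphism on `L`. -/
noncomputable def degL : LGrp t ht p →+ ℤ :=
  QuotientAddGroup.lift _ (degAux t p) (degAux_ker t ht p)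

lemma degL_xgen (i : Fin t) : degL t ht p (xgen t ht p i) = dcoef t p i := by
  have := degAux_single t p i 1
  simpa [degL, xgen] using this

/-- Auxiliary mod-`p j` homomorphism on `ℤ^t`. -/
def modAux (j : Fin t) : (Fin t → ℤ) →+ ZMod (p j) where
  toFun f := ((f j : ℤ) : ZMod (p j))
  map_zero' := by simp
  map_add' f g := by push_cast; simp

lemma modAux_single (j i : Fin t) (m : ℤ) :
    modAux t p j (m • Pi.single i 1) = if i = j then (m : ZMod (p j)) else 0 := by
  simp only [modAux, AddMonoidHom.coe_mk, ZeroHom.coe_mk, Pi.smul_apply, Pi.single_apply,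
    smul_eq_mul]
  by_cases h : i = j
  · subst h; simp
  · simp [h, Ne.symm h]

lemma modAux_ker (j : Fin t) (hj : j ≠ ⟨0, ht⟩) : AddSubgroup.closure
    (Set.range fun i : Fin t =>
      (p i : ℤ) • Pi.single i (1 : ℤ) - (p ⟨0, ht⟩ : ℤ) • Pi.single ⟨0, ht⟩ (1 : ℤ))
    ≤ (modAux t p j).ker := by
  rw [AddSubgroup.closure_le]
  rintro g ⟨i, rfl⟩
  simp only [SetLike.mem_coe, AddMonoidHom.mem_ker, map_sub, modAux_single]
  rw [if_neg (Ne.symm hj)]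
  split
  · rename_i h; subst h; simp
  · simp

/-- The mod-`p j` homomorphism on `L`, for `j ≠ 0`. -/
noncomputable def modL (j : Fin t) (hj : j ≠ ⟨0, ht⟩) : LGrp t ht p →+ ZMod (p j) :=
  QuotientAddGroup.lift _ (modAux t p j) (modAux_ker t ht p j hj)

lemma modL_xgen (j : Fin t) (hj : j ≠ ⟨0, ht⟩) (i : Fin t) :
    modL t ht p j hj (xgen t ht p i) = if i = j then 1 else 0 := by
  have := modAux_single t p j i 1
  simpa [modL, xgen] using this

lemma degL_cElem : degL t ht p (cElem t ht p)
    = (p ⟨0, ht⟩ : ℤ) * dcoef t p ⟨0, ht⟩ := by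
  rw [cElem, map_zsmul, degL_xgen, smul_eq_mul]

lemma modL_cElem (j : Fin t) (hj : j ≠ ⟨0, ht⟩) :
    modL t ht p j hj (cElem t ht p) = 0 := by
  rw [cElem, map_zsmul, modL_xgen, if_neg (fun h => hj h.symm), smul_zero]

lemma pj_sub_one_le (j : Fin t) (hpj : 1 ≤ p j) (a : ℕ)
    (h : ((a : ℤ) : ZMod (p j)) = -1) : (p j : ℤ) - 1 ≤ (a : ℤ) := by
  have h1 : ((a : ℕ) : ZMod (p j)) = ((p j - 1 : ℕ) : ZMod (p j)) := by
    rw [Nat.cast_sub hpj]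
    push_cast at h ⊢
    rw [h, ZMod.natCast_self]
    ring
  have h2 : a % p j = (p j - 1) % p j := (ZMod.natCast_eq_natCast_iff _ _ _).mp h1
  have h3 : (p j - 1) % p j = p j - 1 := Nat.mod_eq_of_lt (by omega)
  have h4 : a % p j ≤ a := Nat.mod_le _ _
  omega

/-- The key non-membership: `c + ω ∉ L₊`. -/
lemma omega_c_not_mem (hp : ∀ i, 2 ≤ p i) :
    cElem t ht p + omegaElem t ht p ∉ posCone t ht p := by
  rintro ⟨a, h⟩
  set i0 : Fin t := ⟨0, ht⟩ with hi0
  set d : Fin t → ℤ := dcoef t p with hd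
  set P : ℤ := (p i0 : ℤ) * d i0 with hP
  have hPd : ∀ i, (p i : ℤ) * d i = P := by
    intro i
    rw [hP, hd, p_mul_dcoef, p_mul_dcoef]
  have hdeg : ((t : ℤ) - 1) * P - ∑ i, d i = ∑ i, (a i : ℤ) * d i := by
    have := congrArg (degL t ht p) h
    rw [omegaElem, map_add, map_sub, map_zsmul, map_sum, map_sum] at this
    simp only [degL_xgen, degL_cElem, map_zsmul, smul_eq_mul] at this
    rw [← hP] at this
    linarith [this]
  have hcong : ∀ j, ∀ hj : j ≠ i0, (p j : ℤ) - 1 ≤ (a j : ℤ) := by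
    intro j hj
    have h2 := congrArg (modL t ht p j hj) h
    rw [omegaElem, map_add, map_sub, map_zsmul, map_sum, map_sum] at h2
    simp only [modL_xgen, modL_cElem, map_zsmul, smul_ite, smul_zero, zsmul_one,
      Finset.sum_ite_eq', Finset.mem_univ, if_true, zero_add, zero_sub] at h2
    refine pj_sub_one_le t p j (by have := hp j; omega) (a j) ?_
    rw [← h2]
  have hdpos : ∀ i, 0 < d i := fun i => dcoef_pos t p hp i
  have hsum1 : ∑ i, ((p i : ℤ) - 1) * d i = (t : ℤ) * P - ∑ i, d i := by
    have h1 : ∑ i, (p i : ℤ) * d i = (t : ℤ) * P := by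
      rw [Finset.sum_congr rfl fun i _ => hPd i]
      simp [Finset.card_univ, mul_comm]
    have h2 : ∑ i, ((p i : ℤ) - 1) * d i = ∑ i, ((p i : ℤ) * d i - d i) :=
      Finset.sum_congr rfl fun i _ => by ring
    rw [h2, Finset.sum_sub_distrib, h1]
  have hlow : ∑ i ∈ Finset.univ.erase i0, ((p i : ℤ) - 1) * d i ≤ ∑ i, (a i : ℤ) * d i := by
    have hle : ∑ i ∈ Finset.univ.erase i0, ((p i : ℤ) - 1) * d i
        ≤ ∑ i ∈ Finset.univ.erase i0, (a i : ℤ) * d i :=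
      Finset.sum_le_sum fun i hi =>
        mul_le_mul_of_nonneg_right (hcong i (Finset.ne_of_mem_erase hi)) (hdpos i).le
    have h3 : ∑ i ∈ Finset.univ.erase i0, (a i : ℤ) * d i ≤ ∑ i, (a i : ℤ) * d i := by
      rw [← Finset.add_sum_erase Finset.univ _ (Finset.mem_univ i0)]
      have : (0:ℤ) ≤ (a i0 : ℤ) * d i0 := mul_nonneg (by positivity) (hdpos i0).le
      linarith
    linarith
  have hsplit : ((p i0 : ℤ) - 1) * d i0
        + ∑ i ∈ Finset.univ.erase i0, ((p i : ℤ) - 1) * d i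
      = ∑ i, ((p i : ℤ) - 1) * d i :=
    Finset.add_sum_erase Finset.univ (fun i => ((p i : ℤ) - 1) * d i) (Finset.mem_univ i0)
  have hx : ((p i0 : ℤ) - 1) * d i0 = P - d i0 := by
    rw [sub_mul, one_mul, hPd i0]
  linarith [hdpos i0]

/-- Reassembly: `m • c + ∑ bᵢ • xᵢ ∈ L₊` when `m ≥ 0`. -/
lemma mem_posCone_of (m : ℤ) (hm : 0 ≤ m) (b : Fin t → ℕ) :
    m • cElem t ht p + ∑ i, (b i : ℤ) • xgen t ht p i ∈ posCone t ht p := by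
  refine ⟨fun i => (if i = ⟨0, ht⟩ then m.toNat * p ⟨0, ht⟩ else 0) + b i, ?_⟩
  have hsplit : ∑ i, (((if i = ⟨0, ht⟩ then m.toNat * p ⟨0, ht⟩ else 0) + b i : ℕ) : ℤ)
        • xgen t ht p i
      = ∑ i, ((((if i = ⟨0, ht⟩ then (m.toNat * p ⟨0, ht⟩ : ℕ) else 0) : ℕ) : ℤ)
          • xgen t ht p i + ((b i : ℤ)) • xgen t ht p i) := by
    refine Finset.sum_congr rfl fun i _ => ?_
    rw [Nat.cast_add, add_zsmul]
  rw [hsplit, Finset.sum_add_distrib]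
  congr 1
  have : ∑ i, (((if i = ⟨0, ht⟩ then (m.toNat * p ⟨0, ht⟩ : ℕ) else 0) : ℕ) : ℤ)
        • xgen t ht p i
      = ∑ i, (if i = ⟨0, ht⟩ then ((m.toNat * p ⟨0, ht⟩ : ℕ) : ℤ) • xgen t ht p i else 0) := by
    refine Finset.sum_congr rfl fun i _ => ?_
    split <;> simp
  rw [this, Finset.sum_ite_eq' Finset.univ _ (fun i => ((m.toNat * p ⟨0, ht⟩ : ℕ) : ℤ)
    • xgen t ht p i), if_pos (Finset.mem_univ _)]
  push_cast
  rw [Int.toNat_of_nonneg hm, cElem, smul_smul, mul_comm]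

/-- Carry identity: `n • xᵢ = c - (pᵢ - n) • xᵢ` for `n ≤ pᵢ`. -/
lemma carry (i : Fin t) (n : ℕ) (hn : n ≤ p i) :
    ((n : ℕ) : ℤ) • xgen t ht p i
      = cElem t ht p - ((p i - n : ℕ) : ℤ) • xgen t ht p i := by
  rw [← rel t ht p i, Nat.cast_sub hn, sub_zsmul]
  abel

/-- Dichotomy: for every `z`, `c - z ∈ L₊` or `z + ω ∈ L₊`. -/
lemma dichotomy (hp : ∀ i, 2 ≤ p i) (z : LGrp t ht p) :
    cElem t ht p - z ∈ posCone t ht p ∨ z + omegaElem t ht p ∈ posCone t ht p := by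
  obtain ⟨m, a, ha, rfl⟩ := normal_form t ht p hp z
  set k : ℕ := (Finset.univ.filter (fun i => ¬ a i = 0)).card with hk
  set z0 : ℕ := (Finset.univ.filter (fun i => a i = 0)).card with hz0
  have hz0k : z0 + k = t := by
    rw [hz0, hk, Finset.card_filter_add_card_filter_not, Finset.card_univ, Fintype.card_fin]
  by_cases hmk : m + (k : ℤ) ≤ 1
  · left
    set b : Fin t → ℕ := fun i => if a i = 0 then 0 else p i - a i with hb
    have claimA : ∑ i, (a i : ℤ) • xgen t ht p i
        = (k : ℤ) • cElem t ht p - ∑ i, (b i : ℤ) • xgen t ht p i := by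
      have term : ∀ i, (a i : ℤ) • xgen t ht p i
          = (if a i = 0 then (0:ℤ) else 1) • cElem t ht p - (b i : ℤ) • xgen t ht p i := by
        intro i
        by_cases h : a i = 0
        · simp [h, hb]
        · rw [if_neg h, one_zsmul, hb]
          simp only [if_neg h]
          exact carry t ht p i (a i) (ha i).le
      rw [Finset.sum_congr rfl fun i _ => term i, Finset.sum_sub_distrib]
      congr 1
      rw [show ∑ i, (if a i = 0 then (0:ℤ) else 1) • cElem t ht p
          = (∑ i, (if a i = 0 then (0:ℤ) else 1)) • cElem t ht p from
        (map_sum (zmultiplesHom _ (cElem t ht p)) _ _).symm]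
      congr 1
      have : ∀ i, (if a i = 0 then (0:ℤ) else 1) = (if ¬ a i = 0 then 1 else 0) := by
        intro i; by_cases h : a i = 0 <;> simp [h]
      rw [Finset.sum_congr rfl fun i _ => this i, Finset.sum_boole]
    have hco : (1 - m - (k:ℤ)) • cElem t ht p
        = (1:ℤ) • cElem t ht p - m • cElem t ht p - (k:ℤ) • cElem t ht p := by
      rw [sub_zsmul, sub_zsmul]
      abel
    have heq : cElem t ht p - (m • cElem t ht p + ∑ i, (a i : ℤ) • xgen t ht p i)
        = (1 - m - (k:ℤ)) • cElem t ht p + ∑ i, (b i : ℤ) • xgen t ht p i := by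
      rw [claimA, hco, one_zsmul]
      abel
    rw [heq]
    exact mem_posCone_of t ht p _ (by linarith) b
  · right
    set e : Fin t → ℕ := fun i => if a i = 0 then p i - 1 else a i - 1 with he
    have claimB : ∑ i, ((a i : ℤ) - 1) • xgen t ht p i
        = (-(z0 : ℤ)) • cElem t ht p + ∑ i, (e i : ℤ) • xgen t ht p i := by
      have term : ∀ i, ((a i : ℤ) - 1) • xgen t ht p i
          = (if a i = 0 then (-1:ℤ) else 0) • cElem t ht p + (e i : ℤ) • xgen t ht p i := by
        intro i
        by_cases h : a i = 0
        · simp only [h, if_pos, Nat.cast_zero, zero_sub, he]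
          have hc := carry t ht p i 1 (by have := hp i; omega)
          rw [Nat.cast_one] at hc
          have h2 : ((p i - 1 : ℕ) : ℤ) • xgen t ht p i
              = cElem t ht p - (1:ℤ) • xgen t ht p i := by rw [hc]; abel
          rw [h2]
          abel
        · rw [if_neg h, zero_zsmul, zero_add, he]
          simp only [if_neg h]
          rw [Nat.cast_sub (by omega), Nat.cast_one]
      rw [Finset.sum_congr rfl fun i _ => term i, Finset.sum_add_distrib]
      congr 1
      rw [show ∑ i, (if a i = 0 then (-1:ℤ) else 0) • cElem t ht p
          = (∑ i, (if a i = 0 then (-1:ℤ) else 0)) • cElem t ht p from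
        (map_sum (zmultiplesHom _ (cElem t ht p)) _ _).symm]
      congr 1
      have : ∀ i, (if a i = 0 then (-1:ℤ) else 0) = -(if a i = 0 then 1 else 0) := by
        intro i; by_cases h : a i = 0 <;> simp [h]
      rw [Finset.sum_congr rfl fun i _ => this i, Finset.sum_neg_distrib]
      congr 1
      rw [Finset.sum_boole]
    have h1 : ∑ i, (a i : ℤ) • xgen t ht p i - ∑ i, xgen t ht p i
        = ∑ i, ((a i : ℤ) - 1) • xgen t ht p i := by
      rw [← Finset.sum_sub_distrib]
      exact Finset.sum_congr rfl fun i _ => by rw [sub_zsmul, one_zsmul]; abel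
    have hz0c : (z0 : ℤ) = (t : ℤ) - (k : ℤ) := by
      have := hz0k; omega
    have hco : m • cElem t ht p + ((t:ℤ) - 2) • cElem t ht p + (-(z0:ℤ)) • cElem t ht p
        = (m + (k:ℤ) - 2) • cElem t ht p := by
      rw [← add_zsmul, ← add_zsmul]
      congr 1
      rw [hz0c]; ring
    have heq : (m • cElem t ht p + ∑ i, (a i : ℤ) • xgen t ht p i) + omegaElem t ht p
        = (m + (k:ℤ) - 2) • cElem t ht p + ∑ i, (e i : ℤ) • xgen t ht p i := by
      rw [omegaElem]
      calc m • cElem t ht p + ∑ i, (a i : ℤ) • xgen t ht p i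
            + (((t:ℤ) - 2) • cElem t ht p - ∑ i, xgen t ht p i)
          = m • cElem t ht p + ((t:ℤ) - 2) • cElem t ht p
            + (∑ i, (a i : ℤ) • xgen t ht p i - ∑ i, xgen t ht p i) := by abel
        _ = m • cElem t ht p + ((t:ℤ) - 2) • cElem t ht p
            + ((-(z0:ℤ)) • cElem t ht p + ∑ i, (e i : ℤ) • xgen t ht p i) := by
            rw [h1, claimB]
        _ = (m • cElem t ht p + ((t:ℤ) - 2) • cElem t ht p + (-(z0:ℤ)) • cElem t ht p)
            + ∑ i, (e i : ℤ) • xgen t ht p i := by abel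
        _ = (m + (k:ℤ) - 2) • cElem t ht p + ∑ i, (e i : ℤ) • xgen t ht p i := by rw [hco]
    rw [heq]
    exact mem_posCone_of t ht p _ (by omega) e

/-- `z + ω ∉ L₊ ↔ c - z ∈ L₊`. -/
lemma key_iff (hp : ∀ i, 2 ≤ p i) (w : LGrp t ht p) :
    w + omegaElem t ht p ∉ posCone t ht p ↔ cElem t ht p - w ∈ posCone t ht p := by
  constructor
  · intro hn
    rcases dichotomy t ht p hp w with h | h
    · exact h
    · exact absurd h hn
  · intro hmem hw
    have hsum := posCone_add t ht p hw hmem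
    have hab : (w + omegaElem t ht p) + (cElem t ht p - w)
        = cElem t ht p + omegaElem t ht p := by abel
    rw [hab] at hsum
    exact omega_c_not_mem t ht p hp hsum

end Aux

/-- for every `z ∈ L`, `-c ≤ z ≤ c` holds iff neither `z + ω ≥ 0`
nor `-z + ω ≥ 0`. -/
theorem ext_vanishing_criterion
    (t : ℕ) (ht : 0 < t) (p : Fin t → ℕ) (hp : ∀ i, 2 ≤ p i)
    (z : LGrp t ht p) :
    (z + cElem t ht p ∈ posCone t ht p ∧ cElem t ht p - z ∈ posCone t ht p) ↔
      (z + omegaElem t ht p ∉ posCone t ht p ∧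
        -z + omegaElem t ht p ∉ posCone t ht p) := by
  constructor
  · rintro ⟨h1, h2⟩
    refine ⟨(key_iff t ht p hp z).mpr h2, (key_iff t ht p hp (-z)).mpr ?_⟩
    rw [sub_neg_eq_add, add_comm (cElem t ht p) z]
    exact h1
  · rintro ⟨h1, h2⟩
    have hA := (key_iff t ht p hp (-z)).mp h2
    rw [sub_neg_eq_add, add_comm (cElem t ht p) z] at hA
    exact ⟨hA, (key_iff t ht p hp z).mp h1⟩
end

section
/- Let x ∈ L have normal form x = ℓ_1x_1 + ⋯ + ℓ_tx_t + ℓ·c with 0 ≤ ℓ_i < p_i and ℓ ∈ ℤ. Then x ∈ L_+ (i.e., x ≥ 0) if and only if ℓ ≥ 0. -/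
open scoped BigOperators

def wtHom {t : ℕ} (w : Fin t → ℤ) : (Fin t → ℤ) →+ ℤ where
  toFun v := ∑ i, v i * w i
  map_zero' := by simp
  map_add' a b := by simp [add_mul, Finset.sum_add_distrib]

@[simp] lemma wtHom_apply {t : ℕ} (w v : Fin t → ℤ) : wtHom w v = ∑ i, v i * w i := rfl

@[simp] lemma wtHom_single {t : ℕ} (w : Fin t → ℤ) (i : Fin t) :
    wtHom w (Pi.single i 1) = w i := by
  classical
  rw [wtHom_apply, Finset.sum_eq_single i]
  · simp
  · intro j _ hj; simp [Pi.single_apply, hj]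
  · simp

def liftedHom {t : ℕ} (ht : 0 < t) (p : Fin t → ℕ) {M : Type} [AddCommGroup M]
    (f : (Fin t → ℤ) →+ M)
    (hf : ∀ i : Fin t,
      f ((p i : ℤ) • Pi.single i (1:ℤ) - (p ⟨0,ht⟩ : ℤ) • Pi.single ⟨0,ht⟩ (1:ℤ)) = 0) :
    LGrp t ht p →+ M :=
  QuotientAddGroup.lift _ f (by
    have h : AddSubgroup.closure
        (Set.range fun i : Fin t =>
          (p i : ℤ) • Pi.single i (1:ℤ) - (p ⟨0,ht⟩ : ℤ) • Pi.single ⟨0,ht⟩ (1:ℤ)) ≤ f.ker := by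
      rw [AddSubgroup.closure_le]
      rintro x ⟨i, rfl⟩
      exact hf i
    intro g hg
    exact h hg)

@[simp] lemma liftedHom_xgen {t : ℕ} (ht : 0 < t) (p : Fin t → ℕ) {M : Type} [AddCommGroup M]
    (f : (Fin t → ℤ) →+ M) (hf) (i : Fin t) :
    liftedHom ht p f hf (xgen t ht p i) = f (Pi.single i 1) := rfl

@[simp] lemma liftedHom_cElem {t : ℕ} (ht : 0 < t) (p : Fin t → ℕ) {M : Type} [AddCommGroup M]
    (f : (Fin t → ℤ) →+ M) (hf) :
    liftedHom ht p f hf (cElem t ht p) = (p ⟨0,ht⟩ : ℤ) • f (Pi.single ⟨0,ht⟩ 1) := by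
  rw [cElem, map_zsmul, liftedHom_xgen]

/-- if `x = ℓ_1 • x_1 + ⋯ + ℓ_t • x_t + ℓ • c` is in normal form
(`0 ≤ ℓ_i < p i`), then `x ≥ 0` iff `ℓ ≥ 0`. -/
theorem normal_form_nonneg_iff
    (t : ℕ) (ht : 0 < t) (p : Fin t → ℕ) (hp : ∀ i, 2 ≤ p i)
    (lv : Fin t → ℤ) (l : ℤ)
    (hbound : ∀ i, 0 ≤ lv i ∧ lv i < (p i : ℤ)) :
    ((∑ i, lv i • xgen t ht p i) + l • cElem t ht p ∈ posCone t ht p) ↔ 0 ≤ l := by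
  classical
  have hppos : ∀ i, (0:ℤ) < (p i : ℤ) := fun i => by
    exact_mod_cast lt_of_lt_of_le (by norm_num) (hp i)
  constructor
  · rintro ⟨a, ha⟩
    -- Step 1: congruences a i ≡ lv i (mod p i), with nonnegative quotient
    have key : ∀ i : Fin t, ∃ k : ℤ, 0 ≤ k ∧ (a i : ℤ) - lv i = (p i : ℤ) * k := by
      intro i
      set f : (Fin t → ℤ) →+ ZMod (p i) :=
        (Int.castAddHom (ZMod (p i))).comp (wtHom (Pi.single i 1)) with hfdef
      have fapp : ∀ v : Fin t → ℤ, f v = ((wtHom (Pi.single i 1) v : ℤ) : ZMod (p i)) :=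
        fun v => rfl
      have hf : ∀ j : Fin t,
          f ((p j : ℤ) • Pi.single j (1:ℤ) - (p ⟨0,ht⟩ : ℤ) • Pi.single ⟨0,ht⟩ (1:ℤ)) = 0 := by
        intro j
        rw [fapp, map_sub, map_zsmul, map_zsmul, wtHom_single, wtHom_single]
        simp only [Pi.single_apply, smul_eq_mul]
        split_ifs with h1 h2 h2 <;> push_cast <;>
          simp_all [ZMod.natCast_self]
      have h2 := congrArg (liftedHom ht p f hf) ha
      simp only [map_add, map_sum, map_zsmul, liftedHom_xgen, liftedHom_cElem, fapp,
        wtHom_single, Pi.single_apply] at h2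
      have hc : ((p ⟨0,ht⟩ : ℤ)) •
          (((if (⟨0,ht⟩ : Fin t) = i then (1:ℤ) else 0) : ℤ) : ZMod (p i)) = 0 := by
        split_ifs with h
        · rw [h]
          simp only [Int.cast_one, zsmul_eq_mul, mul_one]
          push_cast
          simp [ZMod.natCast_self]
        · simp
      rw [hc, smul_zero, add_zero] at h2
      have hL : ∀ c : Fin t → ℤ,
          ∑ x, c x • (((if x = i then (1:ℤ) else 0) : ℤ) : ZMod (p i))
            = ((c i : ℤ) : ZMod (p i)) := by
        intro c
        rw [Finset.sum_eq_single i]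
        · simp
        · intro j _ hj; simp [hj]
        · simp
      rw [hL lv, hL (fun x => ((a x : ℕ) : ℤ))] at h2
      have hdvd : ((p i : ℕ) : ℤ) ∣ ((a i : ℕ) : ℤ) - lv i :=
        Int.ModEq.dvd ((ZMod.intCast_eq_intCast_iff _ _ _).mp h2)
      obtain ⟨k, hk⟩ := hdvd
      refine ⟨k, ?_, hk⟩
      by_contra hneg
      push_neg at hneg
      have hk1 : k ≤ -1 := by omega
      have : (p i : ℤ) * k ≤ (p i : ℤ) * (-1) :=
        mul_le_mul_of_nonneg_left hk1 (le_of_lt (hppos i))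
      have ha0 : (0:ℤ) ≤ ((a i : ℕ) : ℤ) := Int.natCast_nonneg _
      linarith [(hbound i).2]
    choose k hknn hkeq using key
    -- Step 2: the integer weight homomorphism
    set q : Fin t → ℤ := fun i => ∏ j ∈ Finset.univ.erase i, (p j : ℤ) with hq
    set N : ℤ := ∏ j, (p j : ℤ) with hN
    have hqN : ∀ i, (p i : ℤ) * q i = N := by
      intro i
      simp only [hq, hN]
      exact Finset.mul_prod_erase Finset.univ (fun j => (p j : ℤ)) (Finset.mem_univ i)
    have hF : ∀ j : Fin t,
        wtHom q ((p j : ℤ) • Pi.single j (1:ℤ) - (p ⟨0,ht⟩ : ℤ) • Pi.single ⟨0,ht⟩ (1:ℤ)) = 0 := by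
      intro j
      rw [map_sub, map_zsmul, map_zsmul, wtHom_single, wtHom_single, smul_eq_mul, smul_eq_mul,
        hqN, hqN, sub_self]
    have h1 := congrArg (liftedHom ht p (wtHom q) hF) ha
    simp only [map_add, map_sum, map_zsmul, liftedHom_xgen, liftedHom_cElem,
      wtHom_single, smul_eq_mul] at h1
    -- h1 : ∑ j, lv j * q j + l * ((p i0) * q i0) = ∑ j, (a j) * q j
    have e1 : ∑ j, ((a j : ℤ) - lv j) * q j = (∑ j, k j) * N := by
      rw [Finset.sum_mul]
      refine Finset.sum_congr rfl (fun j _ => ?_)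
      rw [hkeq j, ← hqN j]; ring
    have e2 : ∑ j, ((a j : ℤ) - lv j) * q j
        = (∑ j, (a j : ℤ) * q j) - ∑ j, lv j * q j := by
      rw [← Finset.sum_sub_distrib]
      exact Finset.sum_congr rfl (fun j _ => by ring)
    have h3 : l * N = (∑ j, k j) * N := by
      rw [hqN] at h1
      rw [← e1, e2]
      linarith [h1]
    have hN0 : (0:ℤ) < N := Finset.prod_pos (fun i _ => hppos i)
    have hl : l = ∑ j, k j := mul_right_cancel₀ (ne_of_gt hN0) h3
    rw [hl]
    exact Finset.sum_nonneg (fun j _ => hknn j)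
  · intro hl
    refine ⟨fun i => if i = ⟨0,ht⟩ then (lv i + l * p ⟨0,ht⟩).toNat else (lv i).toNat, ?_⟩
    have hcast : ∀ i : Fin t,
        (((if i = ⟨0,ht⟩ then (lv i + l * p ⟨0,ht⟩).toNat else (lv i).toNat : ℕ)) : ℤ)
          = lv i + (if i = ⟨0,ht⟩ then l * (p ⟨0,ht⟩ : ℤ) else 0) := by
      intro i
      split_ifs with h
      · rw [Int.toNat_of_nonneg]
        exact add_nonneg (hbound i).1 (mul_nonneg hl (by positivity))
      · rw [Int.toNat_of_nonneg (hbound i).1, add_zero]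
    have hsum : ∑ i, (if i = ⟨0,ht⟩ then l * (p ⟨0,ht⟩ : ℤ) else 0) • xgen t ht p i
        = l • cElem t ht p := by
      rw [Finset.sum_eq_single (⟨0,ht⟩ : Fin t)]
      · simp [cElem, mul_zsmul]
      · intro j _ hj; simp [hj, zero_zsmul]
      · simp
    calc (∑ i, lv i • xgen t ht p i) + l • cElem t ht p
        = (∑ i, lv i • xgen t ht p i)
          + ∑ i, (if i = ⟨0,ht⟩ then l * (p ⟨0,ht⟩ : ℤ) else 0) • xgen t ht p i := by
          rw [hsum]
      _ = ∑ i, (lv i + (if i = ⟨0,ht⟩ then l * (p ⟨0,ht⟩ : ℤ) else 0)) • xgen t ht p i := by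
          rw [← Finset.sum_add_distrib]
          exact Finset.sum_congr rfl (fun i _ => (add_zsmul _ _ _).symm)
      _ = _ := by
          exact Finset.sum_congr rfl (fun i _ => by rw [hcast i])
end

section
/- The index [L : ℤω] of the cyclic subgroup generated by ω in L equals the absolute value of the integer (2−t)·∏_{i=1}^t p_i + Σ_{i=1}^t ∏_{j≠i} p_j (which equals p_1⋯p_t·χ, where χ := 2 − Σ_{i=1}^t (1 − 1/p_i) is the orbifold Euler characteristic); here an index value of 0 on the right-hand side corresponds to ℤω having infinite index, which happens exactly when χ = 0. In particular ±[L : ℤω] = p_1⋯p_t·χ whenever χ ≠ 0. -/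
/-! Lifting `ω` to `w ∈ ℤ^t`, the preimage of `ℤω` in `ℤ^t` is the lattice spanned by `w` and the
relations `p i • e i - p 0 • e 0`. Replacing the zero relation at `i = 0` by `w` gives a square
matrix, and `[L : ℤω]` is the absolute value of its determinant (the index is `0` exactly when the
determinant vanishes). The cofactors along row `0` are `∏_{j ≠ k} p j`, so the determinant is
`∑ k, w k * ∏_{j ≠ k} p j = (t - 2) ∏ p - ∑ k, ∏_{j ≠ k} p j`. -/

open scoped BigOperators

open Matrix Finset

lemma Matrix.det_updateRow_eq_sum_mul_adjugate {n R : Type*} [Fintype n] [DecidableEq n]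
    [CommRing R] (A : Matrix n n R) (i : n) (v : n → R) :
    (A.updateRow i v).det = ∑ j, v j * A.adjugate j i := by
  rw [det_eq_sum_mul_adjugate_row _ i]
  simp only [adjugate_apply, updateRow_self, updateRow_idem]

namespace AddSubgroup

lemma closure_range_update {G ι : Type*} [AddGroup G] [DecidableEq ι] {f : ι → G} {i : ι}
    (hi : f i = 0) (x : G) :
    closure (Set.range (Function.update f i x)) = closure (Set.range f) ⊔ zmultiples x := by
  rw [zmultiples_eq_closure, ← closure_union]
  apply le_antisymm <;> rw [closure_le]
  · rintro _ ⟨j, rfl⟩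
    by_cases hj : j = i
    · rw [hj, Function.update_self]
      exact subset_closure (Or.inr rfl)
    · rw [Function.update_of_ne hj]
      exact subset_closure (Or.inl ⟨j, rfl⟩)
  · rintro _ (⟨j, rfl⟩ | rfl)
    · by_cases hj : j = i
      · rw [hj, hi]
        exact zero_mem _
      · exact subset_closure ⟨j, Function.update_of_ne hj x f⟩
    · exact subset_closure ⟨i, Function.update_self i _ f⟩

lemma index_zmultiples_mk {G : Type*} [AddCommGroup G] (H : AddSubgroup G) (x : G) :
    (zmultiples (x : G ⧸ H)).index = (H ⊔ zmultiples x).index := by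
  rw [← index_comap_of_surjective _ (QuotientAddGroup.mk'_surjective H)]
  change (comap _ (zmultiples (QuotientAddGroup.mk' H x))).index = _
  rw [← AddMonoidHom.map_zmultiples, comap_map_eq, QuotientAddGroup.ker_mk', sup_comm]

lemma index_closure_range_eq_natAbs_det {ι : Type*} [Fintype ι] [DecidableEq ι]
    (v : ι → ι → ℤ) : (closure (Set.range v)).index = (Matrix.of v).det.natAbs := by
  by_cases hdet : (Matrix.of v).det = 0
  · rw [hdet, Int.natAbs_zero]
    obtain ⟨c, hc0, hc⟩ := exists_mulVec_eq_zero_iff.mpr hdet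
    by_contra hidx
    -- a finite index would put a multiple of every `e j` into the kernel of `· ⬝ᵥ c`
    let φ : (ι → ℤ) →+ ℤ := AddMonoidHom.mk' (· ⬝ᵥ c) fun a b => add_dotProduct a b c
    have hle : closure (Set.range v) ≤ φ.ker := by
      rw [closure_le]
      rintro _ ⟨i, rfl⟩
      exact congrFun hc i
    refine hc0 (funext fun j => ?_)
    have hj : ((closure (Set.range v)).index • Pi.single j 1) ⬝ᵥ c = 0 :=
      hle (nsmul_index_mem _ (Pi.single j 1))
    rwa [smul_dotProduct, single_dotProduct, one_mul, smul_eq_zero, or_iff_right hidx] at hj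
  · rw [← Submodule.span_int_eq_addSubgroupClosure,
      index_eq_natAbs_det (Pi.basisFun ℤ ι) _
        (Module.Basis.span (linearIndependent_rows_of_det_ne_zero hdet)),
      Pi.basisFun_det_apply]
    congr 3
    ext i : 1
    exact congrArg Subtype.val (Module.Basis.span_apply _ i)

end AddSubgroup

section RelationMatrix

variable {R : Type*} [CommRing R] {t : ℕ} (ht : 0 < t) (q : Fin t → R)

def relationMatrix : Matrix (Fin t) (Fin t) R :=
  of fun i => q i • Pi.single i 1 - q ⟨0, ht⟩ • Pi.single ⟨0, ht⟩ 1

lemma relationMatrix_apply (i j : Fin t) :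
    relationMatrix ht q i j =
      (if j = i then q i else 0) - (if j = ⟨0, ht⟩ then q ⟨0, ht⟩ else 0) := by
  simp [relationMatrix, Pi.single_apply]

lemma relationMatrix_zero_row : relationMatrix ht q ⟨0, ht⟩ = 0 := sub_self _

lemma det_updateRow_relationMatrix_single_self :
    ((relationMatrix ht q).updateRow ⟨0, ht⟩ (Pi.single ⟨0, ht⟩ 1)).det =
      ∏ j ∈ univ.erase ⟨0, ht⟩, q j := by
  set i₀ : Fin t := ⟨0, ht⟩
  have hi₀ : ∀ i, i₀ ≤ i := fun i => Nat.zero_le i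
  rw [det_of_isLowerTriangular _ ?_, ← mul_prod_erase univ _ (mem_univ i₀)]
  · rw [updateRow_self, Pi.single_eq_same, one_mul]
    refine prod_congr rfl fun j hj => ?_
    rw [updateRow_ne (ne_of_mem_erase hj), relationMatrix_apply, if_pos rfl,
      if_neg (ne_of_mem_erase hj), sub_zero]
  · intro i j (hij : i < j)
    by_cases hi : i = i₀
    · rw [hi, updateRow_self, Pi.single_eq_of_ne (hi ▸ hij).ne']
    · rw [updateRow_ne hi, relationMatrix_apply, if_neg hij.ne',
        if_neg (hi₀ i |>.trans_lt hij).ne', sub_zero]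

lemma det_updateRow_relationMatrix_single_of_ne {k : Fin t} (hk : k ≠ ⟨0, ht⟩) :
    ((relationMatrix ht q).updateRow ⟨0, ht⟩ (Pi.single k 1)).det = ∏ j ∈ univ.erase k, q j := by
  set i₀ : Fin t := ⟨0, ht⟩
  have hi₀ : ∀ i, i₀ ≤ i := fun i => Nat.zero_le i
  set A := (relationMatrix ht q).updateRow i₀ (Pi.single k 1)
  -- Row `k` minus `q k` times row `i₀ = e k` is `-q i₀ • e i₀`; exchanging rows `i₀` and `k`
  -- then gives a lower triangular matrix.
  set C := (A.updateRow k (A k + (-q k) • A i₀)).submatrix (Equiv.swap i₀ k) id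
  have hdet : A.det = -C.det := by
    rw [det_permute, Equiv.Perm.sign_swap hk.symm, det_updateRow_add_smul_self A hk]
    simp
  have hC : ∀ i j, C i j =
      if i = i₀ then -(if j = i₀ then q i₀ else 0)
      else if i = k then (if j = k then 1 else 0) else relationMatrix ht q i j := by
    intro i j
    by_cases hi : i = i₀
    · rw [hi, if_pos rfl]
      simp only [C, A, submatrix_apply, Equiv.swap_apply_left, id_eq, updateRow_self,
        updateRow_ne hk, neg_smul, Pi.add_apply, Pi.neg_apply, Pi.smul_apply, relationMatrix_apply, Pi.single_apply,
        smul_eq_mul, mul_ite, mul_one, mul_zero]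
      ring
    by_cases hik : i = k
    · rw [hik, if_neg hk, if_pos rfl]
      simp [C, A, updateRow_ne hk.symm, Pi.single_apply]
    · rw [if_neg hi, if_neg hik]
      simp [C, A, Equiv.swap_apply_of_ne_of_ne hi hik, updateRow_ne hi, updateRow_ne hik]
  have hCtri : C.IsLowerTriangular := by
    intro i j (hij : i < j)
    rw [hC]
    split_ifs with hi hj hik hjk
    · exact absurd (hi ▸ hj) (hi₀ i |>.trans_lt hij).ne'
    · exact neg_zero
    · exact absurd (hik ▸ hjk) hij.ne'
    · rfl
    · rw [relationMatrix_apply, if_neg hij.ne', if_neg (hi₀ i |>.trans_lt hij).ne', sub_zero]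
  have hi₀k : i₀ ∈ univ.erase k := mem_erase.mpr ⟨hk.symm, mem_univ _⟩
  have hCdiag : ∀ i ∈ (univ.erase k).erase i₀, C i i = q i := fun i hi => by
    rw [hC, if_neg (ne_of_mem_erase hi), if_neg (ne_of_mem_erase (mem_of_mem_erase hi)),
      relationMatrix_apply, if_pos rfl, if_neg (ne_of_mem_erase hi), sub_zero]
  calc A.det = -(C k k * (C i₀ i₀ * ∏ i ∈ (univ.erase k).erase i₀, C i i)) := by
        rw [hdet, det_of_isLowerTriangular C hCtri, mul_prod_erase _ (fun i => C i i) hi₀k,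
          mul_prod_erase _ (fun i => C i i) (mem_univ k)]
    _ = q i₀ * ∏ i ∈ (univ.erase k).erase i₀, q i := by
        rw [hC k k, hC i₀ i₀, if_neg hk, if_pos rfl, if_pos rfl, if_pos rfl, if_pos rfl,
          prod_congr rfl hCdiag]
        ring
    _ = ∏ j ∈ univ.erase k, q j := mul_prod_erase _ _ hi₀k

lemma adjugate_relationMatrix_apply_zero (k : Fin t) :
    (relationMatrix ht q).adjugate k ⟨0, ht⟩ = ∏ j ∈ univ.erase k, q j := by
  rw [adjugate_apply]
  by_cases hk : k = ⟨0, ht⟩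
  · subst hk
    exact det_updateRow_relationMatrix_single_self ht q
  · exact det_updateRow_relationMatrix_single_of_ne ht q hk

lemma det_updateRow_relationMatrix (v : Fin t → R) :
    ((relationMatrix ht q).updateRow ⟨0, ht⟩ v).det = ∑ k, v k * ∏ j ∈ univ.erase k, q j := by
  simp only [det_updateRow_eq_sum_mul_adjugate, adjugate_relationMatrix_apply_zero]

end RelationMatrix

lemma index_zmultiples_mk_relationMatrix {t : ℕ} (ht : 0 < t) (q v : Fin t → ℤ) :
    (AddSubgroup.zmultiples
        (v : (Fin t → ℤ) ⧸ AddSubgroup.closure (Set.range (relationMatrix ht q)))).index =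
      ((relationMatrix ht q).updateRow ⟨0, ht⟩ v).det.natAbs := by
  rw [AddSubgroup.index_zmultiples_mk,
    ← AddSubgroup.closure_range_update (relationMatrix_zero_row ht q) v,
    AddSubgroup.index_closure_range_eq_natAbs_det]
  rfl

theorem index_zmultiples_omega_general
    (t : ℕ) (ht : 0 < t) (p : Fin t → ℕ) :
    (AddSubgroup.zmultiples (omegaElem t ht p)).index =
      ((2 - (t : ℤ)) * ∏ i, (p i : ℤ) +
        ∑ i : Fin t, ∏ j ∈ Finset.univ.erase i, (p j : ℤ)).natAbs := by
  let w : Fin t → ℤ :=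
    ((t : ℤ) - 2) • ((p ⟨0, ht⟩ : ℤ) • Pi.single ⟨0, ht⟩ 1) - ∑ i, Pi.single i 1
  have hω : omegaElem t ht p = (w : LGrp t ht p) := by
    simp only [w, QuotientAddGroup.mk_sub, QuotientAddGroup.mk_zsmul, QuotientAddGroup.mk_sum]
    rfl
  have hw : ∀ k, w k = ((t : ℤ) - 2) * p ⟨0, ht⟩ * (if k = ⟨0, ht⟩ then 1 else 0) - 1 := by
    intro k
    simp [w, Pi.single_apply]
  rw [hω]
  refine (index_zmultiples_mk_relationMatrix ht (fun i => (p i : ℤ)) w).trans ?_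
  rw [det_updateRow_relationMatrix, ← Int.natAbs_neg]
  congr 1
  simp only [hw, sub_mul, sum_sub_distrib, one_mul, mul_ite, mul_one, mul_zero, ite_mul, zero_mul,
    sum_ite_eq', mem_univ, if_true]
  linear_combination (2 - (t : ℤ)) * mul_prod_erase univ (fun j => (p j : ℤ)) (mem_univ ⟨0, ht⟩)

/-- the index `[L : ℤω]` equals the absolute value of
`(2 - t) ∏ p i + Σ_i ∏_{j ≠ i} p j` (which is `p_1 ⋯ p_t · χ`), where an index `0`
means infinite index (the case `χ = 0`). -/
theorem index_zmultiples_omega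
    (t : ℕ) (ht : 0 < t) (p : Fin t → ℕ) (hp : ∀ i, 2 ≤ p i) :
    (AddSubgroup.zmultiples (omegaElem t ht p)).index =
      ((2 - (t : ℤ)) * ∏ i, (p i : ℤ) +
        ∑ i : Fin t, ∏ j ∈ Finset.univ.erase i, (p j : ℤ)).natAbs :=
  index_zmultiples_omega_general t ht p
end

section
/- An element x ∈ L is a torsion element (i.e., n·x = 0 for some positive integer n) if and only if δ(x) = 0; that is, the torsion subgroup of L equals the kernel of the degree map δ. In particular L has rank one. -/
open scoped BigOperators

/-! Every `p i` divides `p̄`, so `p̄ • x i = (p̄ / p i) • (p i • x i) = δ (x i) • c` with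
`c = p 0 • x 0`; both sides being additive in `x`, `p̄ • x = δ x • c` on all of `L`. Since `ℤ` is
torsion-free and `p̄ ≠ 0`, the torsion of `L` is exactly `ker δ`. Rank–nullity for `δ` then gives
`rank L = rank (range δ) = 1`, and base change to `ℚ` preserves the rank. -/

theorem isOfFinAddOrder_iff_map_eq_zero {G : Type*} [AddCommGroup G] (d : G →+ ℤ) {c : G}
    {N : ℕ} (hN : N ≠ 0) (h : ∀ x : G, N • x = d x • c) (x : G) :
    IsOfFinAddOrder x ↔ d x = 0 := by
  refine ⟨fun hx => (isOfFinAddOrder_iff_eq_zero (d x)).mp (d.isOfFinAddOrder hx), fun hx => ?_⟩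
  exact isOfFinAddOrder_iff_nsmul_eq_zero.mpr ⟨N, Nat.pos_of_ne_zero hN, by rw [h, hx, zero_smul]⟩

universe u in
theorem Module.rank_eq_one_of_isTorsion_ker {R M : Type u} [CommRing R] [IsDomain R]
    [AddCommGroup M] [Module R M] (f : M →ₗ[R] R) (hf : f ≠ 0)
    (hker : Module.IsTorsion R (LinearMap.ker f)) : Module.rank R M = 1 := by
  rw [← f.rank_range_add_rank_ker, hker.rank_eq_zero, add_zero]
  refine le_antisymm ((Submodule.rank_le _).trans (rank_self R).le) ?_
  rw [Cardinal.one_le_iff_pos, rank_pos_iff_exists_ne_zero]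
  obtain ⟨x, hx⟩ := DFunLike.ne_iff.mp hf
  exact ⟨⟨f x, x, rfl⟩, fun h => hx (congrArg Subtype.val h)⟩

namespace LGrp

variable {t : ℕ} {ht : 0 < t} {p : Fin t → ℕ}

theorem zsmul_xgen_eq_cElem (i : Fin t) : (p i : ℤ) • xgen t ht p i = cElem t ht p :=
  (QuotientAddGroup.eq_iff_sub_mem).mpr (AddSubgroup.subset_closure ⟨i, rfl⟩)

theorem addMonoidHom_ext {A : Type*} [AddCommGroup A] {f g : LGrp t ht p →+ A}
    (h : ∀ i, f (xgen t ht p i) = g (xgen t ht p i)) : f = g := by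
  refine QuotientAddGroup.addMonoidHom_ext _ ?_
  ext i
  exact h i

theorem nsmul_eq_degree_zsmul_cElem (d : LGrp t ht p →+ ℤ) {N : ℕ} (hN : ∀ i, p i ∣ N)
    (hd : ∀ i, d (xgen t ht p i) = ((N / p i : ℕ) : ℤ)) (x : LGrp t ht p) :
    N • x = d x • cElem t ht p := by
  suffices nsmulAddMonoidHom N = (zmultiplesHom _ (cElem t ht p)).comp d from
    DFunLike.congr_fun this x
  refine addMonoidHom_ext fun i => ?_
  have hN' : (N : ℤ) = ((N / p i : ℕ) : ℤ) * p i := by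
    exact_mod_cast (Nat.div_mul_cancel (hN i)).symm
  calc N • xgen t ht p i = ((N / p i : ℕ) : ℤ) • (p i : ℤ) • xgen t ht p i := by
        rw [← natCast_zsmul, hN', mul_smul]
    _ = d (xgen t ht p i) • cElem t ht p := by rw [zsmul_xgen_eq_cElem, hd]

theorem degree_cElem (d : LGrp t ht p →+ ℤ) {N : ℕ} (hN : p ⟨0, ht⟩ ∣ N)
    (hd : ∀ i, d (xgen t ht p i) = ((N / p i : ℕ) : ℤ)) : d (cElem t ht p) = N := by
  rw [cElem, map_zsmul, hd, smul_eq_mul, ← Nat.cast_mul, Nat.mul_div_cancel' hN]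

end LGrp

open scoped TensorProduct in
/-- an element `x ∈ L` is torsion iff `δ x = 0`, i.e. the torsion
subgroup of `L` is the kernel of the degree map; in particular `L` has rank one. -/
theorem torsion_eq_ker_degree
    (t : ℕ) (ht : 0 < t) (p : Fin t → ℕ) (hp : ∀ i, 2 ≤ p i)
    (d : LGrp t ht p →+ ℤ)
    (hd : ∀ i : Fin t, d (xgen t ht p i) = ((Finset.univ.lcm p / p i : ℕ) : ℤ)) :
    (∀ x : LGrp t ht p, (∃ n : ℕ, 0 < n ∧ n • x = 0) ↔ d x = 0) ∧
    Module.rank ℚ (ℚ ⊗[ℤ] LGrp t ht p) = 1 := by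
  have hdvd : ∀ i, p i ∣ Finset.univ.lcm p := fun i => Finset.dvd_lcm (Finset.mem_univ i)
  have hlcm : Finset.univ.lcm p ≠ 0 :=
    Finset.lcm_ne_zero_iff.mpr fun i _ => by have := hp i; omega
  have key := LGrp.nsmul_eq_degree_zsmul_cElem d hdvd hd
  have hd_ne : d.toIntLinearMap ≠ 0 :=
    DFunLike.ne_iff.mpr ⟨cElem t ht p, by simpa [LGrp.degree_cElem d (hdvd _) hd] using hlcm⟩
  have hker : Module.IsTorsion ℤ (LinearMap.ker d.toIntLinearMap) := by
    rintro ⟨x, hx : d x = 0⟩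
    refine ⟨⟨(Finset.univ.lcm p : ℕ), mem_nonZeroDivisors_of_ne_zero (by exact_mod_cast hlcm)⟩, ?_⟩
    exact Subtype.ext <| show ((Finset.univ.lcm p : ℕ) : ℤ) • x = 0 by
      rw [natCast_zsmul, key, hx, zero_smul]
  refine ⟨fun x => isOfFinAddOrder_iff_nsmul_eq_zero.symm.trans
    (isOfFinAddOrder_iff_map_eq_zero d hlcm key x), ?_⟩
  rw [(TensorProduct.isBaseChange ℤ (LGrp t ht p) ℚ).rank_eq]
  exact Module.rank_eq_one_of_isTorsion_ker _ hd_ne hker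
end

section
/- For every x ∈ L_+ one has δ(x) ≥ 0, and δ(x) = 0 implies x = 0. Consequently L_+ ∩ (−L_+) = {0}, so the relation x ≤ y (meaning y − x ∈ L_+) is a partial order on L. -/
open scoped BigOperators

/-!
Each generator `x i` has degree `p̄ / p i > 0`, so the degree of `∑ a i • x i` with `a i ∈ ℕ` is a sum
of nonnegative terms, which vanishes only if every `a i` is zero. If `x` and `-x` both lie in `L₊`,
then `δ x ≥ 0` and `-δ x ≥ 0` force `δ x = 0`, hence `x = 0`.
-/

section PositiveDegree

variable {G ι : Type*} [AddCommGroup G] [Fintype ι] (d : G →+ ℤ) {g : ι → G}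

theorem degree_sum_natCast_zsmul (a : ι → ℕ) :
    d (∑ i, (a i : ℤ) • g i) = ∑ i, (a i : ℤ) * d (g i) := by
  simp only [map_sum, map_zsmul, smul_eq_mul]

theorem degree_sum_natCast_zsmul_nonneg (hg : ∀ i, 0 < d (g i)) (a : ι → ℕ) :
    0 ≤ d (∑ i, (a i : ℤ) • g i) := by
  rw [degree_sum_natCast_zsmul]
  exact Finset.sum_nonneg fun i _ => mul_nonneg (Int.natCast_nonneg _) (hg i).le

theorem sum_natCast_zsmul_eq_zero_of_degree_eq_zero (hg : ∀ i, 0 < d (g i)) (a : ι → ℕ)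
    (h : d (∑ i, (a i : ℤ) • g i) = 0) : ∑ i, (a i : ℤ) • g i = 0 := by
  rw [degree_sum_natCast_zsmul, Finset.sum_eq_zero_iff_of_nonneg fun i _ =>
    mul_nonneg (Int.natCast_nonneg _) (hg i).le] at h
  have ha : ∀ i, (a i : ℤ) = 0 := fun i =>
    (mul_eq_zero.mp (h i (Finset.mem_univ i))).resolve_right (hg i).ne'
  simp [ha]

end PositiveDegree

theorem Finset.lcm_div_pos {ι : Type*} {s : Finset ι} {f : ι → ℕ} (hf : ∀ j ∈ s, 0 < f j)
    {i : ι} (hi : i ∈ s) : 0 < s.lcm f / f i := by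
  have hlcm : 0 < s.lcm f := Nat.pos_of_ne_zero fun h0 => by
    obtain ⟨j, hj, hfj⟩ := Finset.lcm_eq_zero_iff.mp h0
    exact (hf j hj).ne' hfj
  exact Nat.div_pos (Nat.le_of_dvd hlcm (Finset.dvd_lcm hi)) (hf i hi)

theorem eq_zero_of_mem_of_neg_mem {G : Type*} [AddGroup G] (d : G →+ ℤ) {C : Set G}
    (hnonneg : ∀ x ∈ C, 0 ≤ d x) (hzero : ∀ x ∈ C, d x = 0 → x = 0)
    {x : G} (hx : x ∈ C) (hnx : -x ∈ C) : x = 0 :=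
  hzero x hx <| le_antisymm (by simpa using hnonneg (-x) hnx) (hnonneg x hx)

/-- `δ` is nonnegative on `L₊` and vanishes there only at `0`;
consequently `L₊ ∩ (-L₊) = {0}`, so `≤` is a partial order on `L`. -/
theorem degree_nonneg_on_posCone
    (t : ℕ) (ht : 0 < t) (p : Fin t → ℕ) (hp : ∀ i, 2 ≤ p i)
    (d : LGrp t ht p →+ ℤ)
    (hd : ∀ i : Fin t, d (xgen t ht p i) = ((Finset.univ.lcm p / p i : ℕ) : ℤ)) :
    (∀ x ∈ posCone t ht p, 0 ≤ d x) ∧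
    (∀ x ∈ posCone t ht p, d x = 0 → x = 0) ∧
    (∀ x : LGrp t ht p, x ∈ posCone t ht p → -x ∈ posCone t ht p → x = 0) := by
  have hdeg : ∀ i, 0 < d (xgen t ht p i) := fun i => by
    rw [hd i]
    exact_mod_cast Finset.lcm_div_pos (fun j _ => by linarith [hp j]) (Finset.mem_univ i)
  have hnonneg : ∀ x ∈ posCone t ht p, 0 ≤ d x := by
    rintro x ⟨a, rfl⟩
    exact degree_sum_natCast_zsmul_nonneg d hdeg a
  have hzero : ∀ x ∈ posCone t ht p, d x = 0 → x = 0 := by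
    rintro x ⟨a, rfl⟩
    exact sum_natCast_zsmul_eq_zero_of_degree_eq_zero d hdeg a
  exact ⟨hnonneg, hzero, fun x => eq_zero_of_mem_of_neg_mem d hnonneg hzero⟩
end
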